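/- arXiv:1412.1702 — 8 statements merged into one kernel-verified Lean document; each statement's English description precedes it below -/
import Mathlib

section
/- Let g ≥ 1 and let b₀ < a₁ < b₁ < a₂ < ⋯ < a_g < b_g < a₀ be real numbers, and set E = [b₀, a₀] \ ⋃_{j=1}^{g} (a_j, b_j) (a union of g+1 pairwise disjoint nondegenerate compact intervals). Then there exist real numbers λ₀ > 0, c₀, and for each j = 1, …, g real numbers λ_j > 0 and c_j ∈ (a_j, b_j), such that the rational function V(x) = λ₀x + c₀ + Σ_{j=1}^{g} λ_j/(c_j − x) satisfies {x ∈ ℝ \ {c₁, …, c_g} : −2 ≤ V(x) ≤ 2} = E. -/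
open Polynomial Finset

namespace Statement0Aux

lemma prod_sign_neg_part (s t : Finset ℕ) (f : ℕ → ℝ) (hts : t ⊆ s)
    (hpos : ∀ i ∈ s, i ∉ t → 0 < f i) (hneg : ∀ i ∈ t, f i < 0) :
    0 < (-1 : ℝ) ^ t.card * ∏ i ∈ s, f i := by
  rw [← Finset.prod_sdiff hts]
  have h1 : 0 < ∏ i ∈ s \ t, f i :=
    Finset.prod_pos fun i hi => hpos i (Finset.mem_sdiff.mp hi).1 (Finset.mem_sdiff.mp hi).2
  have h2 : 0 < ∏ i ∈ t, (-f i) := Finset.prod_pos fun i hi => by linarith [hneg i hi]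
  have h3 : ∏ i ∈ t, (-f i) = (-1 : ℝ) ^ t.card * ∏ i ∈ t, f i := by
    rw [← Finset.prod_const, ← Finset.prod_mul_distrib]
    simp
  have h4 : ((-1 : ℝ) ^ t.card) * ((-1 : ℝ) ^ t.card) = 1 := by
    rw [← pow_add]
    exact (Even.add_self _).neg_one_pow
  have h5 := mul_pos h1 h2
  rw [h3] at h5
  have h6 : (∏ i ∈ s \ t, f i) * ((-1:ℝ) ^ t.card * ∏ i ∈ t, f i)
      = (-1:ℝ) ^ t.card * ((∏ i ∈ s \ t, f i) * ∏ i ∈ t, f i) := by ring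
  rw [h6] at h5
  exact h5

-- monotonicity helper
lemma herglotz_mono (g : ℕ) (l0 c0 : ℝ) (l c : ℕ → ℝ) (hl0 : 0 < l0)
    (hl : ∀ j ∈ Finset.Icc 1 g, 0 < l j)
    (x y : ℝ) (hxy : x < y)
    (hpoles : ∀ j ∈ Finset.Icc 1 g, c j < x ∨ y < c j) :
    l0 * x + c0 + ∑ j ∈ Finset.Icc 1 g, l j / (c j - x)
      < l0 * y + c0 + ∑ j ∈ Finset.Icc 1 g, l j / (c j - y) := by
  have key : ∀ j ∈ Finset.Icc 1 g,
      l j / (c j - y) - l j / (c j - x) = l j * (y - x) / ((c j - x) * (c j - y)) := by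
    intro j hj
    rcases hpoles j hj with h | h
    · have hx : c j - x ≠ 0 := by linarith
      have hy : c j - y ≠ 0 := by linarith
      field_simp
      ring
    · have hx : c j - x ≠ 0 := by linarith
      have hy : c j - y ≠ 0 := by linarith
      field_simp
      ring
  have hsum : ∑ j ∈ Finset.Icc 1 g, l j / (c j - y) - ∑ j ∈ Finset.Icc 1 g, l j / (c j - x)
      = ∑ j ∈ Finset.Icc 1 g, l j * (y - x) / ((c j - x) * (c j - y)) := by
    rw [← Finset.sum_sub_distrib]
    exact Finset.sum_congr rfl key
  have hpos : 0 ≤ ∑ j ∈ Finset.Icc 1 g, l j * (y - x) / ((c j - x) * (c j - y)) := by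
    apply Finset.sum_nonneg
    intro j hj
    have hden : 0 < (c j - x) * (c j - y) := by
      rcases hpoles j hj with h | h
      · have : c j - x < 0 := by linarith
        have : c j - y < 0 := by linarith
        nlinarith
      · nlinarith
    exact le_of_lt (div_pos (mul_pos (hl j hj) (by linarith)) hden)
  nlinarith [hsum, hpos]


section Order

variable {g : ℕ} {a b : ℕ → ℝ}

lemma gapL (h0 : b 0 < a 1) (hba : ∀ j, 1 ≤ j → j < g → b j < a (j + 1)) :
    ∀ j, j < g → b j < a (j + 1) := by
  intro j hj
  cases j with
  | zero => exact h0
  | succ n => exact hba (n+1) (by omega) hj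

lemma bstep (h0 : b 0 < a 1) (hab : ∀ j, 1 ≤ j → j ≤ g → a j < b j)
    (hba : ∀ j, 1 ≤ j → j < g → b j < a (j + 1)) :
    ∀ j, j < g → b j < b (j + 1) := fun j hj =>
  lt_trans (gapL h0 hba j hj) (hab (j+1) (by omega) (by omega))

lemma bmono (h0 : b 0 < a 1) (hab : ∀ j, 1 ≤ j → j ≤ g → a j < b j)
    (hba : ∀ j, 1 ≤ j → j < g → b j < a (j + 1)) :
    ∀ i j, i ≤ j → j ≤ g → b i ≤ b j := by
  intro i j hij hjg
  induction j with
  | zero =>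
    have : i = 0 := by omega
    simp [this]
  | succ n ih =>
    rcases Nat.lt_or_ge i (n+1) with h | h
    · have hin : i ≤ n := Nat.lt_succ_iff.mp h
      have h1 := ih hin (by omega)
      have h2 := bstep h0 hab hba n (by omega)
      linarith
    · have : i = n + 1 := le_antisymm hij h
      simp [this]

lemma amono (h0 : b 0 < a 1) (hab : ∀ j, 1 ≤ j → j ≤ g → a j < b j)
    (hba : ∀ j, 1 ≤ j → j < g → b j < a (j + 1)) :
    ∀ i j, 1 ≤ i → i ≤ j → j ≤ g → a i ≤ a j := by
  intro i j hi hij hjg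
  induction j with
  | zero => omega
  | succ n ih =>
    rcases Nat.lt_or_ge i (n+1) with h | h
    · have hin : i ≤ n := Nat.lt_succ_iff.mp h
      have h1 := ih hin (by omega)
      have h2 : a n < a (n+1) :=
        lt_trans (hab n (by omega) (by omega)) (gapL h0 hba n (by omega))
      linarith
    · have : i = n + 1 := le_antisymm hij h
      simp [this]

lemma b_lt_a (h0 : b 0 < a 1) (hab : ∀ j, 1 ≤ j → j ≤ g → a j < b j)
    (hba : ∀ j, 1 ≤ j → j < g → b j < a (j + 1)) :
    ∀ i j, i < j → j ≤ g → b i < a j := by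
  intro i j hij hjg
  obtain ⟨n, rfl⟩ : ∃ n, j = n + 1 := ⟨j - 1, by omega⟩
  calc b i ≤ b n := bmono h0 hab hba i n (by omega) (by omega)
    _ < a (n+1) := gapL h0 hba n (by omega)

lemma b_lt_a0 (h0 : b 0 < a 1) (hab : ∀ j, 1 ≤ j → j ≤ g → a j < b j)
    (hba : ∀ j, 1 ≤ j → j < g → b j < a (j + 1)) (hg0 : b g < a 0) :
    ∀ j, j ≤ g → b j < a 0 := fun j hj =>
  lt_of_le_of_lt (bmono h0 hab hba j g hj le_rfl) hg0

end Order

section Main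

variable {g : ℕ} {a b : ℕ → ℝ}

set_option maxHeartbeats 1000000 in
theorem exists_f (hg : 1 ≤ g)
    (h0 : b 0 < a 1)
    (hab : ∀ j, 1 ≤ j → j ≤ g → a j < b j)
    (hba : ∀ j, 1 ≤ j → j < g → b j < a (j + 1))
    (hg0 : b g < a 0)
    (hblta : ∀ i j, i < j → j ≤ g → b i < a j)
    (hbmono : ∀ i j, i ≤ j → j ≤ g → b i ≤ b j)
    (hamono : ∀ i j, 1 ≤ i → i ≤ j → j ≤ g → a i ≤ a j)
    (hba0 : ∀ j, j ≤ g → b j < a 0) :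
    ∃ (l0 c0 : ℝ) (l c : ℕ → ℝ), 0 < l0 ∧
      (∀ j, 1 ≤ j → j ≤ g → 0 < l j ∧ c j ∈ Set.Ioo (a j) (b j)) ∧
      (∀ k, k ≤ g → l0 * (b k) + c0 + ∑ j ∈ Finset.Icc 1 g, l j / (c j - b k) = -2) ∧
      (l0 * (a 0) + c0 + ∑ j ∈ Finset.Icc 1 g, l j / (c j - a 0) = 2) ∧
      (∀ k, 1 ≤ k → k ≤ g → l0 * (a k) + c0 + ∑ j ∈ Finset.Icc 1 g, l j / (c j - a k) = 2) := by
  classical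
  set Rg : Finset ℕ := Finset.range (g + 1) with hRg
  set S : Finset ℕ := Finset.Icc 1 g with hS
  set A : ℝ[X] := ∏ i ∈ Rg, (X - C (a i)) with hA
  set B : ℝ[X] := ∏ i ∈ Rg, (X - C (b i)) with hB
  set D : ℝ[X] := B - A with hD
  have hXCne : ∀ r : ℝ, (X - C r) ≠ 0 := fun r => X_sub_C_ne_zero r
  have hAm : A.Monic := monic_prod_of_monic _ _ fun i _ => monic_X_sub_C _
  have hBm : B.Monic := monic_prod_of_monic _ _ fun i _ => monic_X_sub_C _
  have hRgcard : Rg.card = g + 1 := Finset.card_range _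
  have hScard : S.card = g := by simp [hS, Nat.card_Icc]
  have hAdeg : A.natDegree = g + 1 := by
    rw [hA, natDegree_prod _ _ (fun i _ => hXCne (a i))]
    simp [natDegree_X_sub_C, hRgcard]
  have hBdeg : B.natDegree = g + 1 := by
    rw [hB, natDegree_prod _ _ (fun i _ => hXCne (b i))]
    simp [natDegree_X_sub_C, hRgcard]
  have hAeval : ∀ x : ℝ, A.eval x = ∏ i ∈ Rg, (x - a i) := by
    intro x; simp [hA, eval_prod]
  have hBeval : ∀ x : ℝ, B.eval x = ∏ i ∈ Rg, (x - b i) := by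
    intro x; simp [hB, eval_prod]
  -- coefficients
  have hAcg : A.coeff g = -∑ i ∈ Rg, a i := by
    have := prod_X_sub_C_coeff_card_pred Rg a (by rw [hRgcard]; omega)
    rwa [hRgcard, Nat.add_sub_cancel] at this
  have hBcg : B.coeff g = -∑ i ∈ Rg, b i := by
    have := prod_X_sub_C_coeff_card_pred Rg b (by rw [hRgcard]; omega)
    rwa [hRgcard, Nat.add_sub_cancel] at this
  set dd : ℝ := ∑ i ∈ Rg, a i - ∑ i ∈ Rg, b i with hdd_def
  have hDcg : D.coeff g = dd := by
    rw [hD, coeff_sub, hAcg, hBcg]; ring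
  have hdd : 0 < dd := by
    have e1 : ∑ i ∈ Rg, a i = a 0 + ∑ i ∈ Finset.range g, a (i + 1) := by
      rw [hRg, Finset.sum_range_succ']
      ring
    have e2 : ∑ i ∈ Rg, b i = (∑ i ∈ Finset.range g, b i) + b g := by
      rw [hRg, Finset.sum_range_succ]
    have e3 : ∀ i ∈ Finset.range g, b i < a (i + 1) := by
      intro i hi
      exact hblta i (i+1) (by omega) (by simpa using (Finset.mem_range.mp hi))
    have e4 : ∑ i ∈ Finset.range g, b i < ∑ i ∈ Finset.range g, a (i + 1) := by
      apply Finset.sum_lt_sum_of_nonempty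
      · exact ⟨0, Finset.mem_range.mpr (by omega)⟩
      · exact e3
    rw [hdd_def, e1, e2]
    have := hba0 g le_rfl
    linarith
  have hdd0 : dd ≠ 0 := ne_of_gt hdd
  have hDdeg : D.natDegree ≤ g := by
    rw [natDegree_le_iff_coeff_eq_zero]
    intro N hN
    rcases Nat.lt_or_ge N (g + 2) with h | h
    · have hNg : N = g + 1 := by omega
      have e1 : A.coeff N = 1 := by rw [hNg, ← hAdeg, hAm.coeff_natDegree]
      have e2 : B.coeff N = 1 := by rw [hNg, ← hBdeg, hBm.coeff_natDegree]
      rw [hD, coeff_sub, e1, e2]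
      ring
    · rw [hD, coeff_sub, coeff_eq_zero_of_natDegree_lt (by omega : B.natDegree < N),
        coeff_eq_zero_of_natDegree_lt (by omega : A.natDegree < N)]
      ring
  -- sign facts
  have hBx : ∀ j, 1 ≤ j → j ≤ g → ∀ x : ℝ, a j ≤ x → x < b j →
      0 < (-1:ℝ) ^ (g + 1 - j) * B.eval x := by
    intro j hj1 hjg x hax hxb
    rw [hBeval]
    have hcard : (Finset.Icc j g).card = g + 1 - j := by simp [Nat.card_Icc]
    rw [← hcard]
    apply prod_sign_neg_part
    · intro i hi
      have := Finset.mem_Icc.mp hi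
      rw [hRg, Finset.mem_range]
      omega
    · intro i hiR hit
      have hiR' : i < g + 1 := by
        rw [hRg] at hiR
        exact Finset.mem_range.mp hiR
      have hij : i < j := by
        have : ¬ (j ≤ i ∧ i ≤ g) := by simpa [Finset.mem_Icc] using hit
        omega
      have : b i < a j := hblta i j hij hjg
      linarith
    · intro i hit
      have hit' := Finset.mem_Icc.mp hit
      have : b j ≤ b i := hbmono j i hit'.1 hit'.2
      linarith
  have hAb : ∀ j, 1 ≤ j → j ≤ g →
      0 < (-1:ℝ) ^ (g + 1 - j) * A.eval (b j) := by
    intro j hj1 hjg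
    rw [hAeval]
    have h0t : (0:ℕ) ∉ Finset.Icc (j+1) g := by simp
    have hcard : (insert 0 (Finset.Icc (j+1) g)).card = g + 1 - j := by
      rw [Finset.card_insert_of_notMem h0t]
      simp [Nat.card_Icc]
      omega
    rw [← hcard]
    apply prod_sign_neg_part
    · intro i hi
      rw [hRg, Finset.mem_range]
      rcases Finset.mem_insert.mp hi with h | h
      · omega
      · have := Finset.mem_Icc.mp h
        omega
    · intro i hiR hit
      have hiR' : i < g + 1 := by
        rw [hRg] at hiR
        exact Finset.mem_range.mp hiR
      have hi1 : 1 ≤ i := by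
        by_contra hcon
        have hi0 : i = 0 := by omega
        exact hit (by simp [hi0])
      have hij : i ≤ j := by
        have : ¬ (j + 1 ≤ i ∧ i ≤ g) := by
          intro hcon
          exact hit (Finset.mem_insert.mpr (Or.inr (Finset.mem_Icc.mpr hcon)))
        omega
      have : a i ≤ a j := hamono i j hi1 hij hjg
      have := hab j hj1 hjg
      linarith
    · intro i hit
      rcases Finset.mem_insert.mp hit with h | h
      · subst h
        have := hba0 j hjg
        linarith
      · have h' := Finset.mem_Icc.mp h
        have : b j < a i := hblta j i (by omega) h'.2
        linarith
  have hsq : ∀ n : ℕ, ((-1:ℝ) ^ n) * ((-1:ℝ) ^ n) = 1 := by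
    intro n
    rw [← pow_add]
    exact (Even.add_self _).neg_one_pow
  have hAa0 : ∀ j, j ≤ g → A.eval (a j) = 0 := by
    intro j hj
    have hj' : j ∈ Rg := by rw [hRg, Finset.mem_range]; omega
    rw [hAeval]
    exact Finset.prod_eq_zero hj' (sub_self _)
  have hBb0 : ∀ k, k ≤ g → B.eval (b k) = 0 := by
    intro k hk
    have hk' : k ∈ Rg := by rw [hRg, Finset.mem_range]; omega
    rw [hBeval]
    exact Finset.prod_eq_zero hk' (sub_self _)
  -- roots of D in the gaps
  have hroot : ∀ j : ℕ, ∃ x : ℝ, 1 ≤ j → j ≤ g →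
      x ∈ Set.Ioo (a j) (b j) ∧ D.eval x = 0 := by
    intro j
    by_cases hj : 1 ≤ j ∧ j ≤ g
    · obtain ⟨hj1, hjg⟩ := hj
      have hDa : D.eval (a j) = B.eval (a j) := by
        rw [hD, eval_sub, hAa0 j hjg]
        ring
      have hDb : D.eval (b j) = -(A.eval (b j)) := by
        rw [hD, eval_sub, hBb0 j hjg]
        ring
      have h1 := hBx j hj1 hjg (a j) le_rfl (hab j hj1 hjg)
      have h2 := hAb j hj1 hjg
      have hsign : D.eval (a j) * D.eval (b j) < 0 := by
        rw [hDa, hDb]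
        nlinarith [mul_pos h1 h2, hsq (g + 1 - j)]
      have hcont : ContinuousOn (fun x => D.eval x) (Set.Icc (a j) (b j)) :=
        (Polynomial.continuous D).continuousOn
      have hle : a j ≤ b j := (hab j hj1 hjg).le
      rcases mul_neg_iff.mp hsign with ⟨hpa, hnb⟩ | ⟨hna, hpb⟩
      · have := intermediate_value_Ioo' hle hcont
        have h0 : (0:ℝ) ∈ Set.Ioo (D.eval (b j)) (D.eval (a j)) := ⟨hnb, hpa⟩
        obtain ⟨x, hx, hx0⟩ := this h0
        exact ⟨x, fun _ _ => ⟨hx, hx0⟩⟩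
      · have := intermediate_value_Ioo hle hcont
        have h0 : (0:ℝ) ∈ Set.Ioo (D.eval (a j)) (D.eval (b j)) := ⟨hna, hpb⟩
        obtain ⟨x, hx, hx0⟩ := this h0
        exact ⟨x, fun _ _ => ⟨hx, hx0⟩⟩
    · exact ⟨0, fun h1 h2 => absurd ⟨h1, h2⟩ hj⟩
  choose c hc using hroot
  have hcIoo : ∀ j, 1 ≤ j → j ≤ g → c j ∈ Set.Ioo (a j) (b j) := fun j h1 h2 => (hc j h1 h2).1
  have hcroot : ∀ j, 1 ≤ j → j ≤ g → D.eval (c j) = 0 := fun j h1 h2 => (hc j h1 h2).2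
  have hclt : ∀ i j, 1 ≤ i → i < j → j ≤ g → c i < c j := by
    intro i j hi1 hij hjg
    have h1 := (hcIoo i hi1 (by omega)).2
    have h2 := (hcIoo j (by omega) hjg).1
    have h3 : b i < a j := hblta i j hij hjg
    linarith
  set Q : ℝ[X] := ∏ j ∈ S, (X - C (c j)) with hQ
  have hQm : Q.Monic := monic_prod_of_monic _ _ fun i _ => monic_X_sub_C _
  have hQdeg : Q.natDegree = g := by
    rw [hQ, natDegree_prod _ _ (fun i _ => hXCne (c i))]
    simp [natDegree_X_sub_C, hScard]
  have hQeval : ∀ x : ℝ, Q.eval x = ∏ i ∈ S, (x - c i) := by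
    intro x; simp [hQ, eval_prod]
  have hcardim : (S.image c).card = g := by
    rw [Finset.card_image_of_injOn, hScard]
    intro i hi j hj hij
    have hi' := Finset.mem_Icc.mp (Finset.mem_coe.mp hi)
    have hj' := Finset.mem_Icc.mp (Finset.mem_coe.mp hj)
    by_contra hne
    rcases Nat.lt_or_ge i j with h | h
    · exact absurd hij (ne_of_lt (hclt i j hi'.1 h hj'.2))
    · exact absurd hij.symm (ne_of_lt (hclt j i hj'.1 (by omega) hi'.2))
  have hzero : ∀ P : ℝ[X], P.natDegree < g → (∀ j ∈ S, P.eval (c j) = 0) → P = 0 := by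
    intro P hdeg hev
    apply Polynomial.eq_zero_of_natDegree_lt_card_of_eval_eq_zero' P (S.image c)
    · intro x hx
      obtain ⟨j, hj, rfl⟩ := Finset.mem_image.mp hx
      exact hev j hj
    · rw [hcardim]; exact hdeg
  have hdeglt : ∀ P : ℝ[X], P.natDegree ≤ g → P.coeff g = 0 →
      (∀ j ∈ S, P.eval (c j) = 0) → P = 0 := by
    intro P hle hcf hev
    rcases lt_or_eq_of_le hle with h | h
    · exact hzero P h hev
    · by_contra hne
      exact hne (leadingCoeff_eq_zero.mp (by rw [Polynomial.leadingCoeff, h, hcf]))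
  have hQcg : Q.coeff g = 1 := by
    rw [← hQdeg]; exact hQm.coeff_natDegree
  have hfact : D = C dd * Q := by
    have h1 : (D - C dd * Q).natDegree ≤ g := le_trans (natDegree_sub_le _ _) (by
      simp only [max_le_iff]
      exact ⟨hDdeg, le_trans (natDegree_C_mul_le _ _) (le_of_eq hQdeg)⟩)
    have h2 : (D - C dd * Q).coeff g = 0 := by
      rw [coeff_sub, coeff_C_mul, hQcg, hDcg]
      ring
    have h3 : ∀ j ∈ S, (D - C dd * Q).eval (c j) = 0 := by
      intro j hj
      have hj' := Finset.mem_Icc.mp hj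
      have hQ0 : Q.eval (c j) = 0 := by
        rw [hQeval]; exact Finset.prod_eq_zero hj (sub_self _)
      rw [eval_sub, eval_mul, eval_C, hQ0, hcroot j hj'.1 hj'.2]
      ring
    exact sub_eq_zero.mp (hdeglt _ h1 h2 h3)
  have hDevalx : ∀ x : ℝ, D.eval x = dd * ∏ i ∈ S, (x - c i) := by
    intro x; rw [hfact, eval_mul, eval_C, hQeval]
  set l0 : ℝ := 4 / dd with hl0_def
  have hl0 : 0 < l0 := by positivity
  set c0 : ℝ := (4 * B.coeff g - 2 * dd - l0 * D.coeff (g - 1)) / dd with hc0_def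
  set q : ℕ → ℝ[X] := fun j => ∏ i ∈ S.erase j, (X - C (c i)) with hq
  have hqeval : ∀ (j : ℕ) (x : ℝ), (q j).eval x = ∏ i ∈ S.erase j, (x - c i) := by
    intro j x; simp [hq, eval_prod]
  set l : ℕ → ℝ := fun j => (-4) * B.eval (c j) / (dd * (q j).eval (c j)) with hl_def
  have hqsign : ∀ j, 1 ≤ j → j ≤ g → 0 < (-1:ℝ)^(g - j) * (q j).eval (c j) := by
    intro j hj1 hjg
    rw [hqeval]
    have hcard : (Finset.Icc (j+1) g).card = g - j := by simp [Nat.card_Icc]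
    rw [← hcard]
    apply prod_sign_neg_part
    · intro i hi
      have := Finset.mem_Icc.mp hi
      apply Finset.mem_erase.mpr
      exact ⟨by omega, by rw [hS, Finset.mem_Icc]; omega⟩
    · intro i hi hit
      obtain ⟨hne, hiS⟩ := Finset.mem_erase.mp hi
      rw [hS] at hiS
      have hiS' := Finset.mem_Icc.mp hiS
      have hij : i < j := by
        have : ¬ (j + 1 ≤ i ∧ i ≤ g) := by simpa [Finset.mem_Icc] using hit
        omega
      have := hclt i j hiS'.1 hij hjg
      linarith
    · intro i hit
      have hit' := Finset.mem_Icc.mp hit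
      have := hclt j i hj1 (by omega) hit'.2
      linarith
  have hqne : ∀ j, 1 ≤ j → j ≤ g → (q j).eval (c j) ≠ 0 := by
    intro j h1 h2 h
    have := hqsign j h1 h2
    rw [h] at this
    simp at this
  have hlpos : ∀ j, 1 ≤ j → j ≤ g → 0 < l j := by
    intro j hj1 hjg
    have hcj := hcIoo j hj1 hjg
    have hB' := hBx j hj1 hjg (c j) (le_of_lt hcj.1) hcj.2
    have hq' := hqsign j hj1 hjg
    have he : g + 1 - j = (g - j) + 1 := by omega
    rw [he, pow_succ] at hB'
    have hnum : 0 < (-1:ℝ)^(g-j) * ((-4) * B.eval (c j)) := by nlinarith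
    have hden : 0 < (-1:ℝ)^(g-j) * (dd * (q j).eval (c j)) := by nlinarith
    have e : ((-1:ℝ)^(g-j) * ((-4) * B.eval (c j))) *
        ((-1:ℝ)^(g-j) * (dd * (q j).eval (c j)))
        = ((-1:ℝ)^(g-j) * (-1:ℝ)^(g-j)) *
          (((-4) * B.eval (c j)) * (dd * (q j).eval (c j))) := by ring
    have h' := mul_pos hnum hden
    rw [e, hsq, one_mul] at h'
    show 0 < (-4) * B.eval (c j) / (dd * (q j).eval (c j))
    exact div_pos_iff.mpr (mul_pos_iff.mp h')
  set P : ℝ[X] := C 4 * B - C 2 * D - (C l0 * X + C c0) * D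
      + C dd * ∑ j ∈ S, C (l j) * q j with hP
  have hqdeg : ∀ j, j ∈ S → (q j).natDegree ≤ g - 1 := by
    intro j hj
    rw [hq]
    simp only
    refine le_trans (natDegree_prod_le _ _) ?_
    have h1 : ∀ i ∈ S.erase j, (X - C (c i)).natDegree = 1 :=
      fun i _ => natDegree_X_sub_C _
    rw [Finset.sum_congr rfl h1, Finset.sum_const, Finset.card_erase_of_mem hj, hScard,
      smul_eq_mul, mul_one]
  have hsumdeg : (∑ j ∈ S, C (l j) * q j).natDegree ≤ g - 1 := by
    apply natDegree_sum_le_of_forall_le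
    intro j hj
    exact le_trans (natDegree_C_mul_le _ _) (hqdeg j hj)
  have hDC : D.coeff (g + 1) = 0 := coeff_eq_zero_of_natDegree_lt (by omega)
  have hPcoeff : ∀ N, g - 1 < N → P.coeff N = 0 := by
    intro N hN
    have hN1 : g ≤ N := by omega
    obtain ⟨M, rfl⟩ : ∃ M, N = M + 1 := ⟨N - 1, by omega⟩
    have hsc : (∑ j ∈ S, C (l j) * q j).coeff (M + 1) = 0 :=
      coeff_eq_zero_of_natDegree_lt (lt_of_le_of_lt hsumdeg (by omega))
    have e1 : (C l0 * X + C c0) * D = C l0 * (X * D) + C c0 * D := by ring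
    have hexp : P.coeff (M + 1) = 4 * B.coeff (M + 1) - 2 * D.coeff (M + 1) -
        (l0 * D.coeff M + c0 * D.coeff (M + 1))
        + dd * (∑ j ∈ S, C (l j) * q j).coeff (M + 1) := by
      rw [hP, e1]
      simp only [coeff_add, coeff_sub, coeff_C_mul, coeff_X_mul]
    rcases Nat.lt_or_ge (M + 1) (g + 1) with h | h
    · have hMg : M + 1 = g := by omega
      have hM : M = g - 1 := by omega
      have hc0dd : c0 * dd = 4 * B.coeff g - 2 * dd - l0 * D.coeff (g - 1) := by
        rw [hc0_def]
        field_simp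
      rw [hexp, hsc, hMg, hDcg, hM]
      linarith [hc0dd]
    · rcases Nat.lt_or_ge (M + 1) (g + 2) with h2 | h2
      · have hMg : M + 1 = g + 1 := by omega
        have hM : M = g := by omega
        have hB1 : B.coeff (M + 1) = 1 := by
          rw [hMg, ← hBdeg]
          exact hBm.coeff_natDegree
        have hl0dd : l0 * dd = 4 := by
          rw [hl0_def]
          field_simp
        rw [hexp, hsc, hB1, hM, hDcg, hDC]
        linarith [hl0dd]
      · have e0 : B.coeff (M + 1) = 0 := coeff_eq_zero_of_natDegree_lt (by omega)
        have e2 : D.coeff (M + 1) = 0 := coeff_eq_zero_of_natDegree_lt (by omega)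
        have e3 : D.coeff M = 0 := coeff_eq_zero_of_natDegree_lt (by omega)
        rw [hexp, hsc, e0, e2, e3]
        ring
  have hPdeg : P.natDegree ≤ g - 1 := natDegree_le_iff_coeff_eq_zero.mpr hPcoeff
  have hPev : ∀ j ∈ S, P.eval (c j) = 0 := by
    intro j hj
    have hj' := Finset.mem_Icc.mp hj
    have hDc : D.eval (c j) = 0 := hcroot j hj'.1 hj'.2
    have hsum : (∑ j' ∈ S, C (l j') * q j').eval (c j) = l j * (q j).eval (c j) := by
      rw [eval_finset_sum]
      have : ∀ j' ∈ S, j' ≠ j → (C (l j') * q j').eval (c j) = 0 := by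
        intro j' hj'' hne
        have hmem : j ∈ S.erase j' := Finset.mem_erase.mpr ⟨Ne.symm hne, hj⟩
        rw [eval_mul, eval_C, hqeval]
        rw [Finset.prod_eq_zero (f := fun i => c j - c i) hmem (sub_self _)]
        ring
      rw [Finset.sum_eq_single_of_mem j hj this, eval_mul, eval_C]
    have hde : dd * (l j * (q j).eval (c j)) = -(4 * B.eval (c j)) := by
      have hqj := hqne j hj'.1 hj'.2
      rw [hl_def]
      field_simp
    have hPex : P.eval (c j) = 4 * B.eval (c j) - 2 * D.eval (c j)
        - (l0 * (c j) + c0) * D.eval (c j)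
        + dd * (∑ j' ∈ S, C (l j') * q j').eval (c j) := by
      rw [hP]
      simp only [eval_add, eval_sub, eval_mul, eval_C, eval_X]
    rw [hPex, hDc, hsum, hde]
    ring
  have hP0 : P = 0 := hzero P (by omega) hPev
  -- the key identity
  have hkey : ∀ x : ℝ, D.eval x ≠ 0 →
      l0 * x + c0 + ∑ j ∈ S, l j / (c j - x) = 4 * B.eval x / D.eval x - 2 := by
    intro x hx
    have hprodne : ∀ j ∈ S, (x - c j) ≠ 0 := by
      intro j hj hzero'
      apply hx
      rw [hDevalx, Finset.prod_eq_zero hj hzero']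
      ring
    have hterm : ∀ j ∈ S, l j / (c j - x) = -(dd * (l j * (q j).eval x)) / D.eval x := by
      intro j hj
      have hDx : D.eval x = dd * ((x - c j) * (q j).eval x) := by
        rw [hDevalx, hqeval, ← Finset.mul_prod_erase S (fun i => x - c i) hj]
      have hcx : c j - x ≠ 0 := by
        intro h
        exact hprodne j hj (by linarith [sub_eq_zero.mp h])
      rw [div_eq_div_iff hcx hx, hDx]
      ring
    have hPx' : 4 * B.eval x - 2 * D.eval x - (l0 * x + c0) * D.eval x
        + dd * ∑ j ∈ S, l j * (q j).eval x = 0 := by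
      have h := hP0
      rw [hP] at h
      have h2 := congrArg (eval x) h
      simpa [eval_finset_sum, eval_add, eval_sub, eval_mul, eval_C, eval_X] using h2
    have hsum2 : ∑ j ∈ S, l j / (c j - x)
        = (-(dd * ∑ j ∈ S, l j * (q j).eval x)) / D.eval x := by
      rw [Finset.sum_congr rfl hterm, ← Finset.sum_div]
      congr 1
      rw [Finset.mul_sum, ← Finset.sum_neg_distrib]
      
    rw [hsum2]
    have h4 : dd * ∑ j ∈ S, l j * (q j).eval x
        = -(4 * B.eval x) + 2 * D.eval x + (l0 * x + c0) * D.eval x := by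
      linarith [hPx']
    rw [h4]
    field_simp
    ring
  -- endpoint values
  have hBane : ∀ j, j ≤ g → B.eval (a j) ≠ 0 := by
    intro j hj
    rw [hBeval]
    apply Finset.prod_ne_zero_iff.mpr
    intro i hi
    have hi' : i ≤ g := by rw [hRg, Finset.mem_range] at hi; omega
    rcases Nat.lt_or_ge i j with h | h
    · exact sub_ne_zero.mpr (ne_of_gt (hblta i j h hj))
    · rcases Nat.eq_zero_or_pos j with hj0 | hj1
      · subst hj0
        exact sub_ne_zero.mpr (ne_of_gt (hba0 i hi'))
      · have : a j < b i := lt_of_lt_of_le (hab j hj1 hj) (hbmono j i h hi')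
        exact sub_ne_zero.mpr (ne_of_lt this)
  have hAbne : ∀ k, k ≤ g → A.eval (b k) ≠ 0 := by
    intro k hk
    rw [hAeval]
    apply Finset.prod_ne_zero_iff.mpr
    intro i hi
    have hi' : i ≤ g := by rw [hRg, Finset.mem_range] at hi; omega
    rcases Nat.eq_zero_or_pos i with hi0 | hi1
    · subst hi0
      exact sub_ne_zero.mpr (ne_of_lt (hba0 k hk))
    · rcases Nat.lt_or_ge k i with h | h
      · exact sub_ne_zero.mpr (ne_of_lt (hblta k i h hi'))
      · have : a i < b k := lt_of_le_of_lt (hamono i k hi1 h hk) (hab k (by omega) hk)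
        exact sub_ne_zero.mpr (ne_of_gt this)
  have hfa : ∀ j, j ≤ g → l0 * a j + c0 + ∑ i ∈ S, l i / (c i - a j) = 2 := by
    intro j hj
    have hDa : D.eval (a j) = B.eval (a j) := by
      rw [hD, eval_sub, hAa0 j hj]
      ring
    have hne : D.eval (a j) ≠ 0 := by
      rw [hDa]
      exact hBane j hj
    rw [hkey (a j) hne, hDa, mul_div_assoc, div_self (hBane j hj)]
    norm_num
  have hfb : ∀ k, k ≤ g → l0 * b k + c0 + ∑ i ∈ S, l i / (c i - b k) = -2 := by
    intro k hk
    have hDb : D.eval (b k) = -(A.eval (b k)) := by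
      rw [hD, eval_sub, hBb0 k hk]
      ring
    have hne : D.eval (b k) ≠ 0 := by
      rw [hDb]
      simpa using hAbne k hk
    rw [hkey (b k) hne, hBb0 k hk]
    simp
  exact ⟨l0, c0, l, c, hl0,
    fun j h1 h2 => ⟨hlpos j h1 h2, hcIoo j h1 h2⟩,
    fun k hk => hfb k hk,
    hfa 0 (by omega),
    fun k h1 h2 => hfa k h2⟩

end Main

end Statement0Aux

/-- For a finite system of intervals
`E = [b₀, a₀] \ ⋃_{j=1}^{g} (a_j, b_j)` there exists a rational function of Herglotz
form `V(x) = λ₀x + c₀ + Σ_{j=1}^{g} λ_j/(c_j − x)` with `λ₀ > 0`, `λ_j > 0`,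
`c_j ∈ (a_j, b_j)`, whose preimage of `[-2, 2]` (within the domain of `V`) is exactly `E`. -/
theorem statement0 (g : ℕ) (hg : 1 ≤ g) (a b : ℕ → ℝ)
    (h0 : b 0 < a 1)
    (hab : ∀ j, 1 ≤ j → j ≤ g → a j < b j)
    (hba : ∀ j, 1 ≤ j → j < g → b j < a (j + 1))
    (hg0 : b g < a 0) :
    ∃ (l0 c0 : ℝ) (l c : ℕ → ℝ), 0 < l0 ∧
      (∀ j, 1 ≤ j → j ≤ g → 0 < l j ∧ c j ∈ Set.Ioo (a j) (b j)) ∧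
      {x : ℝ | (∀ j, 1 ≤ j → j ≤ g → x ≠ c j) ∧
          l0 * x + c0 + ∑ j ∈ Finset.Icc 1 g, l j / (c j - x) ∈ Set.Icc (-2 : ℝ) 2} =
        Set.Icc (b 0) (a 0) \ ⋃ j ∈ Finset.Icc 1 g, Set.Ioo (a j) (b j) := by
  classical
  have hblta := Statement0Aux.b_lt_a h0 hab hba
  have hbmono := Statement0Aux.bmono h0 hab hba
  have hamono := Statement0Aux.amono h0 hab hba
  have hba0 := Statement0Aux.b_lt_a0 h0 hab hba hg0
  obtain ⟨l0, c0, l, c, hl0, hlc, hfb, hfa0, hfa⟩ :=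
    Statement0Aux.exists_f hg h0 hab hba hg0 hblta hbmono hamono hba0
  refine ⟨l0, c0, l, c, hl0, hlc, ?_⟩
  have hlpos : ∀ j ∈ Finset.Icc 1 g, 0 < l j := fun j hj =>
    (hlc j (Finset.mem_Icc.mp hj).1 (Finset.mem_Icc.mp hj).2).1
  have hcmem : ∀ j, 1 ≤ j → j ≤ g → a j < c j ∧ c j < b j := fun j h1 h2 =>
    ⟨(hlc j h1 h2).2.1, (hlc j h1 h2).2.2⟩
  have hmono : ∀ x y : ℝ, x < y → (∀ j, 1 ≤ j → j ≤ g → c j < x ∨ y < c j) →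
      l0 * x + c0 + ∑ j ∈ Finset.Icc 1 g, l j / (c j - x)
        < l0 * y + c0 + ∑ j ∈ Finset.Icc 1 g, l j / (c j - y) := by
    intro x y hxy hp
    exact Statement0Aux.herglotz_mono g l0 c0 l c hl0 hlpos x y hxy (fun j hj =>
      hp j (Finset.mem_Icc.mp hj).1 (Finset.mem_Icc.mp hj).2)
  have hclt : ∀ i j, 1 ≤ i → i < j → j ≤ g → c i < c j := by
    intro i j h1 hij hjg
    have e1 := (hcmem i h1 (by omega)).2
    have e2 := (hcmem j (by omega) hjg).1
    have e3 := hblta i j hij hjg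
    linarith
  ext x
  simp only [Set.mem_setOf_eq, Set.mem_diff, Set.mem_Icc, Set.mem_iUnion, Set.mem_Ioo,
    Finset.mem_Icc, not_exists, not_and]
  constructor
  · rintro ⟨hxc, hfx1, hfx2⟩
    set k := Nat.findGreatest (fun i => 1 ≤ i ∧ c i < x) g with hk
    have hkg : k ≤ g := Nat.findGreatest_le g
    have hupper : ∀ j, k < j → j ≤ g → x < c j := by
      intro j hjk hjg
      have h1 : ¬ (1 ≤ j ∧ c j < x) := Nat.findGreatest_is_greatest hjk hjg
      have h2 : x ≠ c j := hxc j (by omega) hjg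
      rcases lt_trichotomy x (c j) with h | h | h
      · exact h
      · exact absurd h h2
      · exact absurd ⟨by omega, h⟩ h1
    have hlower : ∀ j, 1 ≤ j → j ≤ k → c j < x := by
      intro j h1 hjk
      have hk0 : k ≠ 0 := by omega
      have hspec : 1 ≤ k ∧ c k < x := Nat.findGreatest_of_ne_zero hk.symm hk0
      rcases Nat.lt_or_ge j k with h | h
      · exact lt_trans (hclt j k h1 h hkg) hspec.2
      · have hjk2 : j = k := by omega
        rw [hjk2]
        exact hspec.2
    have hbk : b k ≤ x := by
      by_contra hcon
      push_neg at hcon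
      have hpoles : ∀ j, 1 ≤ j → j ≤ g → c j < x ∨ b k < c j := by
        intro j h1 hjg
        rcases le_or_gt j k with h | h
        · exact Or.inl (hlower j h1 h)
        · right
          have h2 := hblta k j h hjg
          have h3 := (hcmem j h1 hjg).1
          linarith
      have hm := hmono x (b k) hcon hpoles
      rw [hfb k hkg] at hm
      linarith
    rcases Nat.lt_or_ge k g with hkg' | hkg'
    · have hak : x ≤ a (k + 1) := by
        by_contra hcon
        push_neg at hcon
        have hpoles : ∀ j, 1 ≤ j → j ≤ g → c j < a (k + 1) ∨ x < c j := by
          intro j h1 hjg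
          rcases le_or_gt j k with h | h
          · left
            have h2 := (hcmem j h1 (by omega)).2
            have h3 := hbmono j k h hkg
            have h4 := hblta k (k + 1) (by omega) (by omega)
            linarith
          · exact Or.inr (hupper j h hjg)
        have hm := hmono (a (k + 1)) x hcon hpoles
        rw [hfa (k + 1) (by omega) (by omega)] at hm
        linarith
      refine ⟨⟨?_, ?_⟩, ?_⟩
      · have h5 := hbmono 0 k (by omega) hkg
        linarith
      · have h4 := hab (k + 1) (by omega) (by omega)
        have h5 := hba0 (k + 1) (by omega)
        linarith
      · intro j hj hgap1 hgap2
        obtain ⟨hj1, hjg⟩ := hj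
        rcases le_or_gt j k with h | h
        · have h5 := hbmono j k h hkg
          linarith
        · have h5 : a (k + 1) ≤ a j := hamono (k + 1) j (by omega) h hjg
          linarith
    · have hkgeq : k = g := by omega
      have hak : x ≤ a 0 := by
        by_contra hcon
        push_neg at hcon
        have hpoles : ∀ j, 1 ≤ j → j ≤ g → c j < a 0 ∨ x < c j := by
          intro j h1 hjg
          left
          have h2 := (hcmem j h1 hjg).2
          have h3 := hba0 j hjg
          linarith
        have hm := hmono (a 0) x hcon hpoles
        rw [hfa0] at hm
        linarith
      refine ⟨⟨?_, hak⟩, ?_⟩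
      · have h5 := hbmono 0 k (by omega) hkg
        linarith
      · intro j hj hgap1 hgap2
        obtain ⟨hj1, hjg⟩ := hj
        have h5 := hbmono j k (by omega) hkg
        linarith
  · rintro ⟨⟨hxb0, hxa0⟩, hgap⟩
    set k := Nat.findGreatest (fun i => b i ≤ x) g with hk
    have hkg : k ≤ g := Nat.findGreatest_le g
    have hbkx : b k ≤ x := by
      rcases Nat.eq_zero_or_pos k with h0' | h0'
      · rw [h0']
        exact hxb0
      · exact Nat.findGreatest_of_ne_zero hk.symm (by omega)
    have hxak : k < g → x ≤ a (k + 1) := by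
      intro hkg'
      have h1 : ¬ b (k + 1) ≤ x := Nat.findGreatest_is_greatest (P := fun i => b i ≤ x) (n := g) (by omega) (by omega)
      push_neg at h1
      by_contra hcon
      push_neg at hcon
      exact hgap (k + 1) ⟨by omega, by omega⟩ hcon h1
    have hxc : ∀ j, 1 ≤ j → j ≤ g → x ≠ c j := by
      intro j h1 h2
      rcases le_or_gt j k with h | h
      · have e1 := (hcmem j h1 (by omega)).2
        have e2 := hbmono j k h hkg
        exact ne_of_gt (by linarith)
      · have hkg' : k < g := by omega
        have e0 := hxak hkg'
        have e1 : a (k + 1) ≤ a j := hamono (k + 1) j (by omega) h h2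
        have e2 := (hcmem j h1 h2).1
        exact ne_of_lt (by linarith)
    have hpolesL : ∀ j, 1 ≤ j → j ≤ g → c j < b k ∨ x < c j := by
      intro j h1 hjg
      rcases le_or_gt j k with h | h
      · left
        have e1 := (hcmem j h1 (by omega)).2
        have e2 := hbmono j k h hkg
        linarith
      · right
        have hkg' : k < g := by omega
        have e0 := hxak hkg'
        have e1 : a (k + 1) ≤ a j := hamono (k + 1) j (by omega) h hjg
        have e2 := (hcmem j h1 hjg).1
        linarith
    refine ⟨hxc, ?_, ?_⟩
    · rcases eq_or_lt_of_le hbkx with he | hlt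
      · have := hfb k hkg
        rw [← he]
        linarith
      · have hm := hmono (b k) x hlt (fun j h1 hjg => by
          rcases hpolesL j h1 hjg with h | h
          · exact Or.inl (by linarith)
          · exact Or.inr h)
        rw [hfb k hkg] at hm
        linarith
    · rcases Nat.lt_or_ge k g with hkg' | hkg'
      · have e0 := hxak hkg'
        have hfak := hfa (k + 1) (by omega) (by omega)
        rcases eq_or_lt_of_le e0 with he | hlt
        · rw [he]
          linarith
        · have hpoles : ∀ j, 1 ≤ j → j ≤ g → c j < x ∨ a (k + 1) < c j := by
            intro j h1 hjg
            rcases le_or_gt j k with h | h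
            · left
              have e1 := (hcmem j h1 (by omega)).2
              have e2 := hbmono j k h hkg
              linarith
            · right
              have e1 : a (k + 1) ≤ a j := hamono (k + 1) j (by omega) h hjg
              have e2 := (hcmem j h1 hjg).1
              linarith
          have hm := hmono x (a (k + 1)) hlt hpoles
          rw [hfak] at hm
          linarith
      · have hkgeq : k = g := by omega
        rcases eq_or_lt_of_le hxa0 with he | hlt
        · rw [he]
          linarith [hfa0]
        · have hpoles : ∀ j, 1 ≤ j → j ≤ g → c j < x ∨ a 0 < c j := by
            intro j h1 hjg
            left
            have e1 := (hcmem j h1 hjg).2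
            have e2 := hbmono j g hjg le_rfl
            rw [hkgeq] at hbkx
            linarith
          have hm := hmono x (a 0) hlt hpoles
          rw [hfa0] at hm
          linarith
end

section
/- The function V of Herglotz form representing a finite system of intervals is unique: if V(x) = λ₀x + c₀ + Σ_{j=1}^{g} λ_j/(c_j − x) and Ṽ(x) = λ̃₀x + c̃₀ + Σ_{j=1}^{g̃} λ̃_j/(c̃_j − x), both with strictly positive λ's and distinct real poles, satisfy {x ∈ ℝ \ {c₁,…,c_g} : V(x) ∈ [−2,2]} = {x ∈ ℝ \ {c̃₁,…,c̃_{g̃}} : Ṽ(x) ∈ [−2,2]}, and this common preimage is a nonempty compact set, then g = g̃, λ₀ = λ̃₀, c₀ = c̃₀, and (after reordering) λ_j = λ̃_j and c_j = c̃_j for all j; in particular V = Ṽ. -/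
open Polynomial Finset

def preimSet (g : ℕ) (l0 c0 : ℝ) (lam c : Fin g → ℝ) : Set ℝ :=
  {x : ℝ | (∀ j, x ≠ c j) ∧
    l0 * x + c0 + ∑ j : Fin g, lam j / (c j - x) ∈ Set.Icc (-2 : ℝ) 2}



noncomputable def hergV (g : ℕ) (l0 c0 : ℝ) (lam c : Fin g → ℝ) (x : ℝ) : ℝ :=
  l0 * x + c0 + ∑ j : Fin g, lam j / (c j - x)

lemma preimSet_eq (g : ℕ) (l0 c0 : ℝ) (lam c : Fin g → ℝ) :
    preimSet g l0 c0 lam c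
      = {x : ℝ | (∀ j, x ≠ c j) ∧ hergV g l0 c0 lam c x ∈ Set.Icc (-2 : ℝ) 2} := rfl

section
variable (g : ℕ) (l0 c0 : ℝ) (lam c : Fin g → ℝ)

lemma hergV_hasDerivAt (x : ℝ) (hx : ∀ j, x ≠ c j) :
    HasDerivAt (hergV g l0 c0 lam c) (l0 + ∑ j : Fin g, lam j / (c j - x)^2) x := by
  have h1 : HasDerivAt (fun y : ℝ => l0 * y + c0) l0 x := by
    simpa using ((hasDerivAt_id x).const_mul l0).add_const c0
  have hterm : ∀ j : Fin g, HasDerivAt (fun y : ℝ => lam j / (c j - y))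
      (lam j / (c j - x)^2) x := by
    intro j
    have hne : c j - x ≠ 0 := sub_ne_zero.2 (Ne.symm (hx j))
    have hd : HasDerivAt (fun y : ℝ => c j - y) (-1) x := by
      simpa using (hasDerivAt_id x).const_sub (c j)
    have := (hasDerivAt_const x (lam j)).div hd hne
    exact this.congr_deriv (by ring)
  have hsum := HasDerivAt.fun_sum (fun j (_ : j ∈ univ) => hterm j)
  exact h1.add hsum

lemma hergV_deriv_pos (lam c : Fin g → ℝ) (hl0 : 0 < l0) (hlam : ∀ j, 0 < lam j) (x : ℝ) :
    0 < l0 + ∑ j : Fin g, lam j / (c j - x)^2 := by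
  have : 0 ≤ ∑ j : Fin g, lam j / (c j - x)^2 :=
    Finset.sum_nonneg fun j _ => div_nonneg (hlam j).le (sq_nonneg _)
  linarith

lemma hergV_strictMonoOn (hl0 : 0 < l0) (hlam : ∀ j, 0 < lam j) (a b : ℝ)
    (h : ∀ y ∈ Set.Icc a b, ∀ j, y ≠ c j) :
    StrictMonoOn (hergV g l0 c0 lam c) (Set.Icc a b) := by
  refine strictMonoOn_of_deriv_pos (convex_Icc a b) ?_ ?_
  · intro y hy
    exact (hergV_hasDerivAt g l0 c0 lam c y (h y hy)).continuousAt.continuousWithinAt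
  · intro y hy
    rw [interior_Icc] at hy
    rw [(hergV_hasDerivAt g l0 c0 lam c y (h y (Set.mem_Icc_of_Ioo hy))).deriv]
    exact hergV_deriv_pos g l0 lam c hl0 hlam y

lemma herg_nonpole_nhds (x : ℝ) (hx : ∀ j, x ≠ c j) :
    ∃ δ > 0, ∀ y : ℝ, |y - x| < δ → ∀ j, y ≠ c j := by
  have hU : IsOpen ((Set.range c)ᶜ) := (Set.finite_range c).isClosed.isOpen_compl
  have hxU : x ∈ (Set.range c)ᶜ := by
    simp only [Set.mem_compl_iff, Set.mem_range, not_exists]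
    exact fun j h => hx j h.symm
  obtain ⟨δ, hδ, hball⟩ := Metric.isOpen_iff.1 hU x hxU
  refine ⟨δ, hδ, fun y hy j hyj => ?_⟩
  have : y ∈ (Set.range c)ᶜ := hball (by simpa [Real.dist_eq] using hy)
  exact this ⟨j, hyj.symm⟩

end

section
variable (g : ℕ) (l0 c0 : ℝ) (lam c : Fin g → ℝ)

lemma herg_rightEnd_iff (hl0 : 0 < l0) (hlam : ∀ j, 0 < lam j) (x : ℝ) :
    (x ∈ preimSet g l0 c0 lam c ∧
        ∃ ε > 0, ∀ y ∈ Set.Ioo x (x + ε), y ∉ preimSet g l0 c0 lam c)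
      ↔ ((∀ j, x ≠ c j) ∧ hergV g l0 c0 lam c x = 2) := by
  constructor
  · rintro ⟨⟨hx, hV⟩, ε, hε, hout⟩
    refine ⟨hx, ?_⟩
    by_contra hne2
    have hVlt : hergV g l0 c0 lam c x < 2 := lt_of_le_of_ne hV.2 hne2
    obtain ⟨δ, hδ, hpole⟩ := herg_nonpole_nhds g c x hx
    have hcont := (hergV_hasDerivAt g l0 c0 lam c x hx).continuousAt
    have h2 : {y : ℝ | hergV g l0 c0 lam c y < 2} ∈ nhds x :=
      hcont.preimage_mem_nhds (Iio_mem_nhds hVlt)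
    obtain ⟨δ', hδ', hlt⟩ := Metric.mem_nhds_iff.1 h2
    set y := x + min (ε/2) (min (δ/2) (δ'/2)) with hy
    have hymx : 0 < min (ε/2) (min (δ/2) (δ'/2)) := by positivity
    have hyδ : y - x < δ := by
      simp only [hy, add_sub_cancel_left]
      calc min (ε/2) (min (δ/2) (δ'/2)) ≤ δ/2 := le_trans (min_le_right _ _) (min_le_left _ _)
        _ < δ := by linarith
    have hyδ' : y - x < δ' := by
      simp only [hy, add_sub_cancel_left]
      calc min (ε/2) (min (δ/2) (δ'/2)) ≤ δ'/2 := le_trans (min_le_right _ _) (min_le_right _ _)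
        _ < δ' := by linarith
    have hxy : x < y := by simp only [hy]; linarith
    have hmono := hergV_strictMonoOn g l0 c0 lam c hl0 hlam x y
      (fun z hz => hpole z (by
        rw [abs_lt]; constructor <;> [linarith [hz.1]; linarith [hz.2, hyδ]]))
    have hVy_lt : hergV g l0 c0 lam c y < 2 := by
      apply hlt
      simp only [Metric.mem_ball, Real.dist_eq]
      rw [abs_lt]; constructor <;> linarith
    have hVy_gt : hergV g l0 c0 lam c x < hergV g l0 c0 lam c y :=
      hmono (Set.left_mem_Icc.2 hxy.le) (Set.right_mem_Icc.2 hxy.le) hxy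
    have hypole : ∀ j, y ≠ c j := hpole y (by rw [abs_lt]; constructor <;> linarith [hyδ])
    have hVx1 : -2 ≤ hergV g l0 c0 lam c x := hV.1
    apply hout y ⟨hxy, by simp only [hy]; linarith [min_le_left (ε/2) (min (δ/2) (δ'/2))]⟩
    rw [preimSet_eq, Set.mem_setOf_eq]
    exact ⟨hypole, ⟨by linarith, hVy_lt.le⟩⟩
  · rintro ⟨hx, hV2⟩
    obtain ⟨δ, hδ, hpole⟩ := herg_nonpole_nhds g c x hx
    refine ⟨?_, δ/2, by positivity, fun y hy hyE => ?_⟩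
    · rw [preimSet_eq, Set.mem_setOf_eq]
      exact ⟨hx, by rw [hV2]; exact ⟨by norm_num, le_refl _⟩⟩
    have hmono := hergV_strictMonoOn g l0 c0 lam c hl0 hlam x y
      (fun z hz => hpole z (by
        rw [abs_lt]; constructor <;> [linarith [hz.1]; linarith [hz.2, hy.2]]))
    have : hergV g l0 c0 lam c x < hergV g l0 c0 lam c y :=
      hmono (Set.left_mem_Icc.2 hy.1.le) (Set.right_mem_Icc.2 hy.1.le) hy.1
    rw [hV2] at this
    have hyE2 : hergV g l0 c0 lam c y ∈ Set.Icc (-2:ℝ) 2 := hyE.2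
    exact absurd hyE2.2 (not_le.2 this)

lemma herg_leftEnd_iff (hl0 : 0 < l0) (hlam : ∀ j, 0 < lam j) (x : ℝ) :
    (x ∈ preimSet g l0 c0 lam c ∧
        ∃ ε > 0, ∀ y ∈ Set.Ioo (x - ε) x, y ∉ preimSet g l0 c0 lam c)
      ↔ ((∀ j, x ≠ c j) ∧ hergV g l0 c0 lam c x = -2) := by
  constructor
  · rintro ⟨⟨hx, hV⟩, ε, hε, hout⟩
    refine ⟨hx, ?_⟩
    by_contra hne2
    have hVgt : -2 < hergV g l0 c0 lam c x := lt_of_le_of_ne hV.1 (Ne.symm hne2)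
    obtain ⟨δ, hδ, hpole⟩ := herg_nonpole_nhds g c x hx
    have hcont := (hergV_hasDerivAt g l0 c0 lam c x hx).continuousAt
    have h2 : {y : ℝ | -2 < hergV g l0 c0 lam c y} ∈ nhds x :=
      hcont.preimage_mem_nhds (Ioi_mem_nhds hVgt)
    obtain ⟨δ', hδ', hlt⟩ := Metric.mem_nhds_iff.1 h2
    set y := x - min (ε/2) (min (δ/2) (δ'/2)) with hy
    have hymx : 0 < min (ε/2) (min (δ/2) (δ'/2)) := by positivity
    have hyδ : x - y < δ := by
      simp only [hy, sub_sub_cancel]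
      calc min (ε/2) (min (δ/2) (δ'/2)) ≤ δ/2 := le_trans (min_le_right _ _) (min_le_left _ _)
        _ < δ := by linarith
    have hyδ' : x - y < δ' := by
      simp only [hy, sub_sub_cancel]
      calc min (ε/2) (min (δ/2) (δ'/2)) ≤ δ'/2 := le_trans (min_le_right _ _) (min_le_right _ _)
        _ < δ' := by linarith
    have hxy : y < x := by simp only [hy]; linarith
    have hmono := hergV_strictMonoOn g l0 c0 lam c hl0 hlam y x
      (fun z hz => hpole z (by
        rw [abs_lt]; constructor <;> [linarith [hz.1, hyδ]; linarith [hz.2]]))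
    have hVy_gt : -2 < hergV g l0 c0 lam c y := by
      apply hlt
      simp only [Metric.mem_ball, Real.dist_eq]
      rw [abs_lt]; constructor <;> linarith
    have hVy_lt : hergV g l0 c0 lam c y < hergV g l0 c0 lam c x :=
      hmono (Set.left_mem_Icc.2 hxy.le) (Set.right_mem_Icc.2 hxy.le) hxy
    have hypole : ∀ j, y ≠ c j := hpole y (by rw [abs_lt]; constructor <;> linarith [hyδ])
    have hVx2 : hergV g l0 c0 lam c x ≤ 2 := hV.2
    apply hout y ⟨by simp only [hy]; linarith [min_le_left (ε/2) (min (δ/2) (δ'/2))], hxy⟩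
    rw [preimSet_eq, Set.mem_setOf_eq]
    exact ⟨hypole, ⟨hVy_gt.le, by linarith⟩⟩
  · rintro ⟨hx, hV2⟩
    obtain ⟨δ, hδ, hpole⟩ := herg_nonpole_nhds g c x hx
    refine ⟨?_, δ/2, by positivity, fun y hy hyE => ?_⟩
    · rw [preimSet_eq, Set.mem_setOf_eq]
      exact ⟨hx, by rw [hV2]; exact ⟨le_refl _, by norm_num⟩⟩
    have hmono := hergV_strictMonoOn g l0 c0 lam c hl0 hlam y x
      (fun z hz => hpole z (by
        rw [abs_lt]; constructor <;> [linarith [hz.1, hy.1]; linarith [hz.2]]))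
    have : hergV g l0 c0 lam c y < hergV g l0 c0 lam c x :=
      hmono (Set.left_mem_Icc.2 hy.2.le) (Set.right_mem_Icc.2 hy.2.le) hy.2
    rw [hV2] at this
    have hyE2 : hergV g l0 c0 lam c y ∈ Set.Icc (-2:ℝ) 2 := hyE.2
    exact absurd hyE2.1 (not_le.2 this)

end

lemma herg_prod_neg {ι : Type*} (s : Finset ι) (f : ι → ℝ[X]) :
    ∏ j ∈ s, (-f j) = (-1)^s.card * ∏ j ∈ s, f j := by
  have : ∀ j : ι, -f j = (-1) * f j := fun j => by ring
  simp only [this, Finset.prod_mul_distrib, Finset.prod_const]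

lemma herg_prod_eq {ι : Type*} (s : Finset ι) (a : ι → ℝ) :
    ∏ j ∈ s, (C (a j) - X) = C ((-1:ℝ)^s.card) * ∏ j ∈ s, (X - C (a j)) := by
  have : ∀ j : ι, (C (a j) - X) = -(X - C (a j)) := fun j => by ring
  rw [Finset.prod_congr rfl fun j _ => this j, herg_prod_neg]
  simp

lemma herg_prod_monic {ι : Type*} (s : Finset ι) (a : ι → ℝ) :
    (∏ j ∈ s, (X - C (a j))).Monic :=
  monic_prod_of_monic _ _ fun j _ => monic_X_sub_C _

lemma herg_prod_natDegree {ι : Type*} (s : Finset ι) (a : ι → ℝ) :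
    (∏ j ∈ s, (C (a j) - X)).natDegree = s.card := by
  rw [herg_prod_eq, natDegree_C_mul (by positivity : ((-1:ℝ)^s.card) ≠ 0),
    natDegree_prod_of_monic _ _ fun j _ => monic_X_sub_C _]
  simp

lemma herg_prod_ne_zero {ι : Type*} (s : Finset ι) (a : ι → ℝ) :
    (∏ j ∈ s, (C (a j) - X)) ≠ 0 := by
  rw [herg_prod_eq]
  exact mul_ne_zero (by simp) (herg_prod_monic s a).ne_zero

lemma herg_prod_degree {ι : Type*} (s : Finset ι) (a : ι → ℝ) :
    (∏ j ∈ s, (C (a j) - X)).degree = (s.card : WithBot ℕ) :=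
  (degree_eq_natDegree (herg_prod_ne_zero s a)).trans (by rw [herg_prod_natDegree])

lemma herg_prod_leadingCoeff {ι : Type*} (s : Finset ι) (a : ι → ℝ) :
    (∏ j ∈ s, (C (a j) - X)).leadingCoeff = (-1:ℝ)^s.card := by
  rw [herg_prod_eq, leadingCoeff_mul, (herg_prod_monic s a).leadingCoeff, leadingCoeff_C, mul_one]

noncomputable def hergQ (g : ℕ) (c : Fin g → ℝ) : ℝ[X] := ∏ j : Fin g, (C (c j) - X)
noncomputable def hergS (g : ℕ) (lam c : Fin g → ℝ) : ℝ[X] :=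
  ∑ j : Fin g, C (lam j) * ∏ i ∈ univ.erase j, (C (c i) - X)
noncomputable def hergP (g : ℕ) (l0 c0 : ℝ) (lam c : Fin g → ℝ) : ℝ[X] :=
  (C l0 * X + C c0) * hergQ g c + hergS g lam c

lemma hergQ_eval (g : ℕ) (c : Fin g → ℝ) (x : ℝ) :
    (hergQ g c).eval x = ∏ j : Fin g, (c j - x) := by
  simp [hergQ, eval_prod]

lemma hergQ_eval_ne (g : ℕ) (c : Fin g → ℝ) (x : ℝ) :
    (hergQ g c).eval x ≠ 0 ↔ ∀ j, x ≠ c j := by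
  rw [hergQ_eval, Finset.prod_ne_zero_iff]
  simp [sub_ne_zero, eq_comm, ne_comm]

lemma herg_sum_mul (g : ℕ) (lam c : Fin g → ℝ) (x : ℝ) (hx : ∀ j, x ≠ c j) :
    (∑ j : Fin g, lam j / (c j - x)) * ∏ j : Fin g, (c j - x) =
      ∑ j : Fin g, lam j * ∏ i ∈ univ.erase j, (c i - x) := by
  have hQ : ∀ j : Fin g, c j - x ≠ 0 := fun j => sub_ne_zero.2 (Ne.symm (hx j))
  rw [Finset.sum_mul]
  refine Finset.sum_congr rfl fun j _ => ?_
  rw [div_mul_eq_mul_div, ← Finset.mul_prod_erase univ _ (mem_univ j),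
    mul_comm (c j - x), mul_div_assoc, mul_div_assoc, div_self (hQ j), mul_one]

lemma hergP_eval (g : ℕ) (l0 c0 : ℝ) (lam c : Fin g → ℝ) (x : ℝ) (hx : ∀ j, x ≠ c j) :
    (hergP g l0 c0 lam c).eval x =
      (l0 * x + c0 + ∑ j : Fin g, lam j / (c j - x)) * (hergQ g c).eval x := by
  simp only [hergP, hergS, eval_add, eval_mul, eval_sum, eval_prod, eval_sub, eval_C,
    eval_X, hergQ_eval, eval_finset_sum]
  rw [add_mul, ← herg_sum_mul g lam c x hx]
  ring

noncomputable def hergR (g : ℕ) (l0 c0 : ℝ) (lam c : Fin g → ℝ) (t : ℝ) : ℝ[X] :=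
  hergP g l0 c0 lam c - C t * hergQ g c

lemma hergR_eq (g : ℕ) (l0 c0 : ℝ) (lam c : Fin g → ℝ) (t : ℝ) :
    hergR g l0 c0 lam c t = (C l0 * X + C (c0 - t)) * hergQ g c + hergS g lam c := by
  simp only [hergR, hergP, map_sub]; ring

lemma hergS_degree_lt' (g : ℕ) (lam c : Fin g → ℝ) :
    (hergS g lam c).degree < ((g : ℕ) : WithBot ℕ) := by
  refine lt_of_le_of_lt (degree_sum_le _ _) ?_
  rw [Finset.sup_lt_iff (by exact WithBot.bot_lt_coe _)]
  intro j _
  refine lt_of_le_of_lt (degree_mul_le _ _) ?_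
  refine lt_of_le_of_lt (add_le_add degree_C_le (le_of_eq (herg_prod_degree _ c))) ?_
  rw [zero_add, Finset.card_erase_of_mem (mem_univ j), Finset.card_univ, Fintype.card_fin]
  have hg : 0 < g := j.pos
  exact_mod_cast Nat.sub_lt hg one_pos

lemma hergS_degree_lt (g : ℕ) (lam c : Fin g → ℝ) :
    (hergS g lam c).degree < ((g + 1 : ℕ) : WithBot ℕ) := by
  refine lt_trans (hergS_degree_lt' g lam c) ?_
  exact_mod_cast Nat.lt_succ_self g

lemma herg_linear_mul_degree (g : ℕ) (c : Fin g → ℝ) (b l0 : ℝ) (hl0 : l0 ≠ 0) :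
    ((C l0 * X + C b) * hergQ g c).degree = ((g + 1 : ℕ) : WithBot ℕ) := by
  rw [degree_mul, degree_linear hl0, hergQ, herg_prod_degree]
  rw [Finset.card_univ, Fintype.card_fin]
  norm_cast
  omega

lemma hergR_degree (g : ℕ) (l0 c0 : ℝ) (lam c : Fin g → ℝ) (t : ℝ) (hl0 : l0 ≠ 0) :
    (hergR g l0 c0 lam c t).degree = ((g + 1 : ℕ) : WithBot ℕ) := by
  rw [hergR_eq, degree_add_eq_left_of_degree_lt, herg_linear_mul_degree g c _ _ hl0]
  rw [herg_linear_mul_degree g c _ _ hl0]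
  exact hergS_degree_lt g lam c

lemma hergR_ne_zero (g : ℕ) (l0 c0 : ℝ) (lam c : Fin g → ℝ) (t : ℝ) (hl0 : l0 ≠ 0) :
    hergR g l0 c0 lam c t ≠ 0 := by
  intro h
  have := hergR_degree g l0 c0 lam c t hl0
  rw [h, degree_zero] at this
  exact (WithBot.bot_ne_coe) this

lemma hergR_natDegree (g : ℕ) (l0 c0 : ℝ) (lam c : Fin g → ℝ) (t : ℝ) (hl0 : l0 ≠ 0) :
    (hergR g l0 c0 lam c t).natDegree = g + 1 :=
  natDegree_eq_of_degree_eq_some (hergR_degree g l0 c0 lam c t hl0)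

lemma hergR_leadingCoeff (g : ℕ) (l0 c0 : ℝ) (lam c : Fin g → ℝ) (t : ℝ) (hl0 : l0 ≠ 0) :
    (hergR g l0 c0 lam c t).leadingCoeff = l0 * (-1:ℝ)^g := by
  rw [hergR_eq, add_comm, leadingCoeff_add_of_degree_lt, leadingCoeff_mul, leadingCoeff_linear hl0,
    hergQ, herg_prod_leadingCoeff, Finset.card_univ, Fintype.card_fin]
  rw [herg_linear_mul_degree g c _ _ hl0]
  exact hergS_degree_lt g lam c

lemma hergR_eval_pole (g : ℕ) (l0 c0 : ℝ) (lam c : Fin g → ℝ) (t : ℝ) (k : Fin g) :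
    (hergR g l0 c0 lam c t).eval (c k) = lam k * ∏ i ∈ univ.erase k, (c i - c k) := by
  have hQ : (hergQ g c).eval (c k) = 0 := by
    rw [hergQ, eval_prod]
    exact Finset.prod_eq_zero (mem_univ k) (by simp)
  rw [hergR, eval_sub, eval_mul, hergP, eval_add, eval_mul, hQ, eval_C]
  rw [hergS, eval_finset_sum]
  rw [Finset.sum_eq_single k]
  · simp [eval_prod]
  · intro j _ hj
    rw [eval_mul, eval_prod]
    have : eval (c k) (C (c k) - X) = 0 := by simp
    rw [Finset.prod_eq_zero (Finset.mem_erase.2 ⟨Ne.symm hj, mem_univ k⟩) this, mul_zero]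
  · simp


lemma hergR_eval_pole_ne (g : ℕ) (l0 c0 : ℝ) (lam c : Fin g → ℝ) (t : ℝ) (k : Fin g)
    (hlam : ∀ j, 0 < lam j) (hc : Function.Injective c) :
    (hergR g l0 c0 lam c t).eval (c k) ≠ 0 := by
  rw [hergR_eval_pole]
  refine mul_ne_zero (ne_of_gt (hlam k)) (Finset.prod_ne_zero_iff.2 fun i hi => ?_)
  exact sub_ne_zero.2 fun h => (Finset.mem_erase.1 hi).1 (hc h)

lemma hergQ_aeval (g : ℕ) (c : Fin g → ℝ) (z : ℂ) :
    aeval z (hergQ g c) = ∏ j : Fin g, ((c j : ℂ) - z) := by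
  rw [hergQ, map_prod]; simp

lemma hergR_aeval_ne (g : ℕ) (l0 c0 : ℝ) (lam c : Fin g → ℝ) (t : ℝ)
    (hl0 : 0 < l0) (hlam : ∀ j, 0 < lam j) (z : ℂ) (hz : z.im ≠ 0) :
    aeval z (hergR g l0 c0 lam c t) ≠ 0 := by
  have hQz : ∀ j : Fin g, ((c j : ℂ) - z) ≠ 0 := by
    intro j h
    apply hz
    have := congrArg Complex.im h
    simpa using this.symm
  have hQ : aeval z (hergQ g c) ≠ 0 := by
    rw [hergQ_aeval]; exact Finset.prod_ne_zero_iff.2 fun j _ => hQz j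
  have key : aeval z (hergR g l0 c0 lam c t) =
      ((l0 : ℂ) * z + (c0 : ℂ) - (t : ℂ) + ∑ j : Fin g, (lam j : ℂ) / ((c j : ℂ) - z)) *
        aeval z (hergQ g c) := by
    rw [hergR, map_sub, map_mul, hergP, map_add, map_mul, hergS, map_sum]
    rw [hergQ_aeval]
    simp only [map_add, map_mul, aeval_X, aeval_C, map_prod, map_sub,
      Complex.coe_algebraMap]
    rw [add_mul, add_mul, sub_mul, Finset.sum_mul]
    rw [show (∑ x : Fin g, (lam x : ℂ) * ∏ i ∈ univ.erase x, ((c i : ℂ) - z))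
        = ∑ j : Fin g, ((lam j : ℂ) / ((c j : ℂ) - z)) * ∏ i : Fin g, ((c i : ℂ) - z) from
      Finset.sum_congr rfl fun j _ => by
        rw [div_mul_eq_mul_div, ← Finset.mul_prod_erase univ _ (mem_univ j),
          mul_comm ((c j : ℂ) - z), mul_div_assoc, mul_div_assoc, div_self (hQz j), mul_one]]
    ring
  rw [key]
  refine mul_ne_zero ?_ hQ
  intro h
  have him := congrArg Complex.im h
  simp only [Complex.add_im, Complex.sub_im, Complex.mul_im, Complex.ofReal_im,
    Complex.ofReal_re, Complex.zero_im] at him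
  rw [Complex.im_sum] at him
  have hterm : ∀ j : Fin g, ((lam j : ℂ) / ((c j : ℂ) - z)).im
      = lam j * z.im / Complex.normSq ((c j : ℂ) - z) := by
    intro j
    rw [Complex.div_im]
    simp only [Complex.ofReal_im, Complex.ofReal_re, Complex.sub_im]
    ring
  rw [Finset.sum_congr rfl fun j _ => hterm j] at him
  have hpos : 0 < l0 + ∑ j : Fin g, lam j / Complex.normSq ((c j : ℂ) - z) := by
    have : ∀ j : Fin g, 0 ≤ lam j / Complex.normSq ((c j : ℂ) - z) := fun j =>
      div_nonneg (hlam j).le (Complex.normSq_nonneg _)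
    have := Finset.sum_nonneg fun j (_ : j ∈ univ) => this j
    linarith
  apply hz
  have : z.im * (l0 + ∑ j : Fin g, lam j / Complex.normSq ((c j : ℂ) - z)) = 0 := by
    rw [mul_add, Finset.mul_sum]
    convert him using 2 with j
    · ring
    · exact Finset.sum_congr rfl fun j _ => by ring
  rcases mul_eq_zero.1 this with h' | h'
  · exact h'
  · exact absurd h' (ne_of_gt hpos)

section
variable (g : ℕ) (l0 c0 : ℝ) (lam c : Fin g → ℝ)

lemma hergR_eval_eq (t x : ℝ) (hx : ∀ j, x ≠ c j) :
    (hergR g l0 c0 lam c t).eval x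
      = (hergV g l0 c0 lam c x - t) * (hergQ g c).eval x := by
  rw [hergR, eval_sub, eval_mul, eval_C, hergP_eval g l0 c0 lam c x hx, hergV]; ring

lemma hergR_isRoot_iff (hlam : ∀ j, 0 < lam j) (hc : Function.Injective c) (t x : ℝ) :
    (hergR g l0 c0 lam c t).IsRoot x ↔ ((∀ j, x ≠ c j) ∧ hergV g l0 c0 lam c x = t) := by
  constructor
  · intro h
    by_cases hx : ∀ j, x ≠ c j
    · refine ⟨hx, ?_⟩
      rw [IsRoot, hergR_eval_eq g l0 c0 lam c t x hx] at h
      rcases mul_eq_zero.1 h with h' | h'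
      · linarith [sub_eq_zero.1 h']
      · exact absurd h' ((hergQ_eval_ne g c x).2 hx)
    · push_neg at hx
      obtain ⟨k, hk⟩ := hx
      rw [IsRoot, hk] at h
      exact absurd h (hergR_eval_pole_ne g l0 c0 lam c t k hlam hc)
  · rintro ⟨hx, hV⟩
    rw [IsRoot, hergR_eval_eq g l0 c0 lam c t x hx, hV, sub_self, zero_mul]

lemma hergR_deriv_ne (hl0 : 0 < l0) (hlam : ∀ j, 0 < lam j) (hc : Function.Injective c)
    (t x : ℝ) (hroot : (hergR g l0 c0 lam c t).IsRoot x) :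
    ((hergR g l0 c0 lam c t).derivative).eval x ≠ 0 := by
  obtain ⟨hx, hVx⟩ := (hergR_isRoot_iff g l0 c0 lam c hlam hc t x).1 hroot
  obtain ⟨δ, hδ, hpole⟩ := herg_nonpole_nhds g c x hx
  have hQx : (hergQ g c).eval x ≠ 0 := (hergQ_eval_ne g c x).2 hx
  have h1 : HasDerivAt (fun y => (hergR g l0 c0 lam c t).eval y)
      (((hergR g l0 c0 lam c t).derivative).eval x) x := Polynomial.hasDerivAt _ x
  have h2 : HasDerivAt (fun y => (hergV g l0 c0 lam c y - t) * (hergQ g c).eval y)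
      ((l0 + ∑ j : Fin g, lam j / (c j - x)^2) * (hergQ g c).eval x
        + (hergV g l0 c0 lam c x - t) * ((hergQ g c).derivative).eval x) x :=
    ((hergV_hasDerivAt g l0 c0 lam c x hx).sub_const t).mul (Polynomial.hasDerivAt _ x)
  have heq : (fun y => (hergR g l0 c0 lam c t).eval y)
      =ᶠ[nhds x] (fun y => (hergV g l0 c0 lam c y - t) * (hergQ g c).eval y) := by
    filter_upwards [Metric.ball_mem_nhds x hδ] with y hy
    exact hergR_eval_eq g l0 c0 lam c t y
      (hpole y (by simpa [Real.dist_eq] using hy))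
  have h3 : HasDerivAt (fun y => (hergR g l0 c0 lam c t).eval y)
      ((l0 + ∑ j : Fin g, lam j / (c j - x)^2) * (hergQ g c).eval x
        + (hergV g l0 c0 lam c x - t) * ((hergQ g c).derivative).eval x) x :=
    h2.congr_of_eventuallyEq heq
  have := h1.unique h3
  rw [this, hVx, sub_self, zero_mul, add_zero]
  exact mul_ne_zero (ne_of_gt (hergV_deriv_pos g l0 lam c hl0 hlam x)) hQx

lemma hergR_roots_nodup (hl0 : 0 < l0) (hlam : ∀ j, 0 < lam j) (hc : Function.Injective c)
    (t : ℝ) : (hergR g l0 c0 lam c t).roots.Nodup := by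
  rw [Multiset.nodup_iff_count_le_one]
  intro r
  rw [count_roots]
  by_contra hcon
  push_neg at hcon
  have h2 : 2 ≤ rootMultiplicity r (hergR g l0 c0 lam c t) := hcon
  have hne := hergR_ne_zero g l0 c0 lam c t (ne_of_gt hl0)
  have hroot : (hergR g l0 c0 lam c t).IsRoot r :=
    (Polynomial.rootMultiplicity_pos hne).1 (by omega)
  have hd := hergR_deriv_ne g l0 c0 lam c hl0 hlam hc t r hroot
  have h0 : rootMultiplicity r ((hergR g l0 c0 lam c t).derivative) = 0 :=
    Polynomial.rootMultiplicity_eq_zero hd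
  rw [Polynomial.derivative_rootMultiplicity_of_root hroot] at h0
  omega

end

section
variable (g : ℕ) (l0 c0 : ℝ) (lam c : Fin g → ℝ)

lemma hergR_roots_card (hl0 : 0 < l0) (hlam : ∀ j, 0 < lam j) (hc : Function.Injective c)
    (t : ℝ) : (hergR g l0 c0 lam c t).roots.card = g + 1 := by
  set p := hergR g l0 c0 lam c t with hp
  have hp0 : p ≠ 0 := hergR_ne_zero g l0 c0 lam c t (ne_of_gt hl0)
  have hdeg : p.natDegree = g + 1 := hergR_natDegree g l0 c0 lam c t (ne_of_gt hl0)
  have hupper : p.roots.card ≤ g + 1 := hdeg ▸ p.card_roots'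
  set f := algebraMap ℝ ℂ with hf
  have hsplit : Splits (p.map f) := IsAlgClosed.splits (p.map f)
  have hcardm : (p.map f).roots.card = g + 1 := by
    rw [← hsplit.natDegree_eq_card_roots, natDegree_map, hdeg]
  have hpm0 : p.map f ≠ 0 := by
    intro h0
    rw [h0] at hcardm
    simp at hcardm
  have hreal : ∀ z ∈ (p.map f).roots, z.im = 0 := by
    intro z hz
    by_contra him
    have hroot : (p.map f).eval z = 0 := (Polynomial.mem_roots hpm0).1 hz
    rw [Polynomial.eval_map, ← Polynomial.aeval_def] at hroot
    exact hergR_aeval_ne g l0 c0 lam c t hl0 hlam z him hroot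
  -- real multiset of roots
  set M : Multiset ℝ := (p.map f).roots.map Complex.re with hM
  have hMcard : M.card = g + 1 := by rw [hM, Multiset.card_map, hcardm]
  have hMroot : ∀ r ∈ M, p.IsRoot r := by
    intro r hr
    rw [hM, Multiset.mem_map] at hr
    obtain ⟨z, hz, hzr⟩ := hr
    have hz0 : z = ((r : ℝ) : ℂ) := by
      apply Complex.ext
      · simp [← hzr]
      · simp [hreal z hz]
    have hroot : (p.map f).eval z = 0 := (Polynomial.mem_roots hpm0).1 hz
    rw [hz0] at hroot
    have h2 : ((p.eval r : ℝ) : ℂ) = 0 := by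
      rw [show ((p.eval r : ℝ) : ℂ) = f (p.eval r) from rfl,
        ← Polynomial.eval₂_at_apply, ← Polynomial.eval_map]
      exact hroot
    show p.eval r = 0
    exact_mod_cast h2
  have hMnodup : M.Nodup := by
    rw [hM]
    refine Multiset.Nodup.map_on ?_ ?_
    · intro z1 hz1 z2 hz2 hre
      exact Complex.ext hre ((hreal z1 hz1).trans (hreal z2 hz2).symm)
    · -- (p.map f).roots nodup
      rw [Multiset.nodup_iff_count_le_one]
      intro z
      rw [count_roots]
      by_contra hcon
      push_neg at hcon
      have hroot : (p.map f).IsRoot z := (Polynomial.rootMultiplicity_pos hpm0).1 (by omega)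
      have hzim : z.im = 0 := by
        by_contra him
        apply hergR_aeval_ne g l0 c0 lam c t hl0 hlam z him
        rw [Polynomial.aeval_def, ← Polynomial.eval_map]
        exact hroot
      have hz0 : z = ((z.re : ℝ) : ℂ) := Complex.ext (by simp) (by simp [hzim])
      have hrroot : p.IsRoot z.re := by
        have h2 : ((p.eval z.re : ℝ) : ℂ) = 0 := by
          rw [show ((p.eval z.re : ℝ) : ℂ) = f (p.eval z.re) from rfl,
            ← Polynomial.eval₂_at_apply, ← Polynomial.eval_map]
          rw [hz0] at hroot
          exact hroot
        show p.eval z.re = 0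
        exact_mod_cast h2
      have hd := hergR_deriv_ne g l0 c0 lam c hl0 hlam hc t z.re hrroot
      have hdm : ((p.map f).derivative).eval z ≠ 0 := by
        rw [Polynomial.derivative_map, hz0, Polynomial.eval_map,
          show ((z.re : ℝ) : ℂ) = f z.re from rfl, Polynomial.eval₂_at_apply]
        have : f (eval z.re (derivative p)) = ((eval z.re (derivative p) : ℝ) : ℂ) := rfl
        rw [this]
        exact_mod_cast hd
      have h0 : rootMultiplicity z ((p.map f).derivative) = 0 :=
        Polynomial.rootMultiplicity_eq_zero hdm
      rw [Polynomial.derivative_rootMultiplicity_of_root hroot] at h0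
      omega
  have hle : M ≤ p.roots := by
    rw [Multiset.le_iff_count]
    intro r
    by_cases hr : r ∈ M
    · have h1 : M.count r = 1 := Multiset.count_eq_one_of_mem hMnodup hr
      rw [h1, count_roots]
      exact (Polynomial.rootMultiplicity_pos hp0).2 (hMroot r hr)
    · simp [Multiset.count_eq_zero_of_notMem hr]
  have hlower : g + 1 ≤ p.roots.card := hMcard ▸ Multiset.card_le_card hle
  omega

end

lemma hergQ_degree (g : ℕ) (c : Fin g → ℝ) : (hergQ g c).degree = (g : WithBot ℕ) := by
  rw [hergQ, herg_prod_degree, Finset.card_univ, Fintype.card_fin]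

lemma hergQ_roots (g : ℕ) (c : Fin g → ℝ) :
    (hergQ g c).roots = (univ.val.map c) := by
  have h1 : hergQ g c = C ((-1:ℝ)^g) * ((univ.val.map c).map fun a => X - C a).prod := by
    rw [hergQ, herg_prod_eq, Finset.card_univ, Fintype.card_fin]
    congr 1
    rw [Multiset.map_map]
    rfl
  rw [h1, roots_C_mul _ (by positivity), roots_multiset_prod_X_sub_C]

lemma hergR_zero (g : ℕ) (l0 c0 : ℝ) (lam c : Fin g → ℝ) :
    hergR g l0 c0 lam c 0 = hergP g l0 c0 lam c := by
  rw [hergR]; simp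

lemma hergR_sub (g : ℕ) (l0 c0 : ℝ) (lam c : Fin g → ℝ) :
    hergR g l0 c0 lam c (-2) - hergR g l0 c0 lam c 2 = C 4 * hergQ g c := by
  rw [hergR, hergR, show (C (4:ℝ)) = C 2 - C (-2) by rw [← C_sub]; norm_num]
  ring

/-- Uniqueness of the Herglotz-form rational function representing a
finite system of intervals: if two such functions have the same (nonempty, compact)
preimage of `[-2,2]`, then they coincide (same degree, same `λ₀, c₀`, and the poles
with their weights agree up to reordering); in particular the functions are equal. -/
theorem statement1 (g g' : ℕ) (l0 c0 l0' c0' : ℝ)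
    (lam c : Fin g → ℝ) (lam' c' : Fin g' → ℝ)
    (hl0 : 0 < l0) (hl0' : 0 < l0')
    (hlam : ∀ j, 0 < lam j) (hlam' : ∀ j, 0 < lam' j)
    (hc : Function.Injective c) (hc' : Function.Injective c')
    (hset : preimSet g l0 c0 lam c = preimSet g' l0' c0' lam' c')
    (hne : (preimSet g l0 c0 lam c).Nonempty)
    (hcpt : IsCompact (preimSet g l0 c0 lam c)) :
    g = g' ∧ l0 = l0' ∧ c0 = c0' ∧
      (∃ σ : Fin g ≃ Fin g', ∀ j, lam j = lam' (σ j) ∧ c j = c' (σ j)) ∧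
      ∀ x : ℝ, (∀ j, x ≠ c j) → (∀ j, x ≠ c' j) →
        l0 * x + c0 + ∑ j : Fin g, lam j / (c j - x) =
          l0' * x + c0' + ∑ j : Fin g', lam' j / (c' j - x) := by
  have hmem2 : ∀ x, (hergR g l0 c0 lam c 2).IsRoot x ↔
      (hergR g' l0' c0' lam' c' 2).IsRoot x := by
    intro x
    rw [hergR_isRoot_iff g l0 c0 lam c hlam hc, hergR_isRoot_iff g' l0' c0' lam' c' hlam' hc',
      ← herg_rightEnd_iff g l0 c0 lam c hl0 hlam x,
      ← herg_rightEnd_iff g' l0' c0' lam' c' hl0' hlam' x, hset]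
  have hmemm2 : ∀ x, (hergR g l0 c0 lam c (-2)).IsRoot x ↔
      (hergR g' l0' c0' lam' c' (-2)).IsRoot x := by
    intro x
    rw [hergR_isRoot_iff g l0 c0 lam c hlam hc, hergR_isRoot_iff g' l0' c0' lam' c' hlam' hc',
      ← herg_leftEnd_iff g l0 c0 lam c hl0 hlam x,
      ← herg_leftEnd_iff g' l0' c0' lam' c' hl0' hlam' x, hset]
  have hne2 := hergR_ne_zero g l0 c0 lam c 2 (ne_of_gt hl0)
  have hne2' := hergR_ne_zero g' l0' c0' lam' c' 2 (ne_of_gt hl0')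
  have hnem2 := hergR_ne_zero g l0 c0 lam c (-2) (ne_of_gt hl0)
  have hnem2' := hergR_ne_zero g' l0' c0' lam' c' (-2) (ne_of_gt hl0')
  have hroots2 : (hergR g l0 c0 lam c 2).roots = (hergR g' l0' c0' lam' c' 2).roots := by
    rw [Multiset.Nodup.ext (hergR_roots_nodup g l0 c0 lam c hl0 hlam hc 2)
      (hergR_roots_nodup g' l0' c0' lam' c' hl0' hlam' hc' 2)]
    intro a
    rw [mem_roots hne2, mem_roots hne2']
    exact hmem2 a
  have hrootsm2 : (hergR g l0 c0 lam c (-2)).roots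
      = (hergR g' l0' c0' lam' c' (-2)).roots := by
    rw [Multiset.Nodup.ext (hergR_roots_nodup g l0 c0 lam c hl0 hlam hc (-2))
      (hergR_roots_nodup g' l0' c0' lam' c' hl0' hlam' hc' (-2))]
    intro a
    rw [mem_roots hnem2, mem_roots hnem2']
    exact hmemm2 a
  -- g = g'
  have hgg : g = g' := by
    have h1 := hergR_roots_card g l0 c0 lam c hl0 hlam hc 2
    have h2 := hergR_roots_card g' l0' c0' lam' c' hl0' hlam' hc' 2
    rw [hroots2, h2] at h1
    omega
  subst hgg
  -- scaled equality of the polynomials R(±2)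
  have key : ∀ t : ℝ, (hergR g l0 c0 lam c t).roots = (hergR g l0' c0' lam' c' t).roots →
      C l0' * hergR g l0 c0 lam c t = C l0 * hergR g l0' c0' lam' c' t := by
    intro t hrt
    have hs1 : Splits (hergR g l0 c0 lam c t) :=
      splits_iff_card_roots.2 (by
        rw [hergR_roots_card g l0 c0 lam c hl0 hlam hc t,
          hergR_natDegree g l0 c0 lam c t (ne_of_gt hl0)])
    have hs2 : Splits (hergR g l0' c0' lam' c' t) :=
      splits_iff_card_roots.2 (by
        rw [hergR_roots_card g l0' c0' lam' c' hl0' hlam' hc' t,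
          hergR_natDegree g l0' c0' lam' c' t (ne_of_gt hl0')])
    rw [hs1.eq_prod_roots, hs2.eq_prod_roots, hrt,
      hergR_leadingCoeff g l0 c0 lam c t (ne_of_gt hl0),
      hergR_leadingCoeff g l0' c0' lam' c' t (ne_of_gt hl0')]
    rw [← mul_assoc, ← mul_assoc, ← C_mul, ← C_mul]
    congr 2
    ring
  have key2 := key 2 hroots2
  have keym2 := key (-2) hrootsm2
  have hQkey : C l0' * hergQ g c = C l0 * hergQ g c' := by
    have h4 : C l0' * (C (4:ℝ) * hergQ g c) = C l0 * (C (4:ℝ) * hergQ g c') := by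
      rw [← hergR_sub g l0 c0 lam c, ← hergR_sub g l0' c0' lam' c']
      
      rw [mul_sub, mul_sub, key2, keym2]
    have h5 : C (4:ℝ) * (C l0' * hergQ g c) = C (4:ℝ) * (C l0 * hergQ g c') := by
      rw [show C (4:ℝ) * (C l0' * hergQ g c) = C l0' * (C (4:ℝ) * hergQ g c) by ring,
        show C (4:ℝ) * (C l0 * hergQ g c') = C l0 * (C (4:ℝ) * hergQ g c') by ring, h4]
    exact mul_left_cancel₀ (by simp : (C (4:ℝ)) ≠ 0) h5
  -- l0 = l0'
  have hll : l0 = l0' := by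
    have h1 := congrArg leadingCoeff hQkey
    rw [leadingCoeff_mul, leadingCoeff_mul, leadingCoeff_C, leadingCoeff_C, hergQ,
      hergQ, herg_prod_leadingCoeff, herg_prod_leadingCoeff] at h1
    have hsign : ((-1:ℝ)^(univ : Finset (Fin g)).card) ≠ 0 := by positivity
    exact (mul_right_cancel₀ hsign h1).symm
  subst hll
  -- Q = Q' and P = P'
  have hQQ : hergQ g c = hergQ g c' := mul_left_cancel₀ (by simp [ne_of_gt hl0]) hQkey
  have hPP : hergP g l0 c0 lam c = hergP g l0 c0' lam' c' := by
    have h1 : hergR g l0 c0 lam c 2 = hergR g l0 c0' lam' c' 2 :=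
      mul_left_cancel₀ (by simp [ne_of_gt hl0]) key2
    have h2 : hergP g l0 c0 lam c = hergR g l0 c0 lam c 2 + C 2 * hergQ g c := by
      rw [hergR]; ring
    rw [h2, h1, hQQ, hergR]; ring
  -- c0 = c0'
  have hcc0 : c0 = c0' := by
    by_contra hne0
    have h1 : C (c0 - c0') * hergQ g c = hergS g lam' c' - hergS g lam c := by
      have := hPP
      rw [hergP, hergP, hQQ] at this
      have h2 : (C c0 - C c0') * hergQ g c' = hergS g lam' c' - hergS g lam c := by
        linear_combination this
      rw [← hQQ] at h2
      rw [← h2, C_sub]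
    have hdl : (C (c0 - c0') * hergQ g c).degree = (g : WithBot ℕ) := by
      rw [degree_C_mul (sub_ne_zero.2 hne0), hergQ_degree]
    have hdr : (hergS g lam' c' - hergS g lam c).degree < (g : WithBot ℕ) :=
      lt_of_le_of_lt (degree_sub_le _ _)
        (max_lt (hergS_degree_lt' g lam' c') (hergS_degree_lt' g lam c))
    rw [h1, ] at hdl
    rw [hdl] at hdr
    exact lt_irrefl _ hdr
  subst hcc0
  -- permutation
  have hmulti : univ.val.map c = univ.val.map c' := by
    rw [← hergQ_roots, ← hergQ_roots, hQQ]
  have hex : ∀ j : Fin g, ∃ i : Fin g, c' i = c j := by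
    intro j
    have : c j ∈ univ.val.map c' := by
      rw [← hmulti, Multiset.mem_map]
      exact ⟨j, by simp, rfl⟩
    rw [Multiset.mem_map] at this
    obtain ⟨i, _, hi⟩ := this
    exact ⟨i, hi⟩
  choose σf hσf using hex
  have hσinj : Function.Injective σf := by
    intro a b hab
    apply hc
    rw [← hσf a, ← hσf b, hab]
  have hσbij : Function.Bijective σf :=
    (Fintype.bijective_iff_injective_and_card σf).2 ⟨hσinj, rfl⟩
  set σ := Equiv.ofBijective σf hσbij with hσdef
  have hcσ : ∀ j, c j = c' (σ j) := fun j => (hσf j).symm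
  -- products over erase are equal
  have hprod : ∀ j : Fin g, ∏ i ∈ univ.erase j, (c i - c j)
      = ∏ i ∈ univ.erase (σ j), (c' i - c j) := by
    intro j
    refine Finset.prod_bij' (fun i _ => σ i) (fun i _ => σ.symm i) ?_ ?_ ?_ ?_ ?_
    · intro a ha
      show σ a ∈ univ.erase (σ j)
      rw [Finset.mem_erase] at ha ⊢
      exact ⟨fun h => ha.1 (σ.injective h), mem_univ _⟩
    · intro a ha
      show σ.symm a ∈ univ.erase j
      rw [Finset.mem_erase] at ha ⊢
      refine ⟨fun h => ha.1 ?_, mem_univ _⟩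
      rw [← h]
      simp
    · intro a _; simp
    · intro a _; simp
    · intro a _
      show c a - c j = c' (σ a) - c j
      rw [hcσ a]
  -- lam equality
  have hlamσ : ∀ j : Fin g, lam j = lam' (σ j) := by
    intro j
    have h1 : (hergP g l0 c0 lam c).eval (c j) = lam j * ∏ i ∈ univ.erase j, (c i - c j) := by
      rw [← hergR_zero]; exact hergR_eval_pole g l0 c0 lam c 0 j
    have h2 : (hergP g l0 c0 lam' c').eval (c' (σ j))
        = lam' (σ j) * ∏ i ∈ univ.erase (σ j), (c' i - c' (σ j)) := by
      rw [← hergR_zero]; exact hergR_eval_pole g l0 c0 lam' c' 0 (σ j)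
    rw [← hPP, ← hcσ j] at h2
    rw [h2, ← hprod j] at h1
    have hA : ∏ i ∈ univ.erase j, (c i - c j) ≠ 0 :=
      Finset.prod_ne_zero_iff.2 fun i hi =>
        sub_ne_zero.2 fun h => (Finset.mem_erase.1 hi).1 (hc h)
    exact (mul_right_cancel₀ hA h1).symm
  refine ⟨rfl, rfl, rfl, ⟨σ, fun j => ⟨hlamσ j, hcσ j⟩⟩, ?_⟩
  intro x hx hx'
  have hQx : (hergQ g c).eval x ≠ 0 := (hergQ_eval_ne g c x).2 hx
  have h1 := hergP_eval g l0 c0 lam c x hx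
  have h2 := hergP_eval g l0 c0 lam' c' x hx'
  rw [← hPP, ← hQQ] at h2
  exact mul_right_cancel₀ hQx (h1.symm.trans h2)
end

section
/- Let g ≥ 1, let c₁, …, c_g be distinct reals, and let p = (p₀,…,p_g), q = (q₀,…,q_g) ∈ ℝ^{g+1} with p_g ≠ 0. For k = 1,…,g define λ_k = (row vector (−q_{k−1}, p_{k−1})) · [∏_{j=k}^{g−1} a(c_k, c_{j+1}; p_j, q_j)] · a(c_k; p_g, q_g) · [∏_{j=0}^{k−2} a(c_k, c_{j+1}; p_j, q_j)] · (column vector (p_{k−1}, q_{k−1})), where empty products are the identity matrix. Then for every real z ∉ {c₁, …, c_g}: trace 𝔄(z) = z/p_g − (Σ_{j=0}^{g} p_j q_j)/p_g + Σ_{k=1}^{g} λ_k/(c_k − z). -/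
open Matrix

/-- The matrix `𝔧 = [[0,−1],[1,0]]`. -/
def jmat : Matrix (Fin 2) (Fin 2) ℝ := !![0, -1; 1, 0]

/-- The Blaschke–Potapov factor
`a(z,c;p,q) = I − (c−z)⁻¹ · (p,q)ᵀ(p,q) · 𝔧`, defined for `z ≠ c`. -/
noncomputable def bpa (z c p q : ℝ) : Matrix (Fin 2) (Fin 2) ℝ :=
  1 - (c - z)⁻¹ •
    ((!![p; q] : Matrix (Fin 2) (Fin 1) ℝ) * (!![p, q] : Matrix (Fin 1) (Fin 2) ℝ) * jmat)

/-- The Blaschke–Potapov factor at infinity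
`a(z;p,q) = [[0, −p],[1/p, (z−pq)/p]]`, defined for `p ≠ 0`. -/
noncomputable def bpinf (z p q : ℝ) : Matrix (Fin 2) (Fin 2) ℝ :=
  !![0, -p; 1 / p, (z - p * q) / p]

/-- Ordered (noncommutative) product `F s * F (s+1) * ⋯ * F (s+n−1)`;
for `n = 0` this is the identity matrix. -/
noncomputable def prodBP (F : ℕ → Matrix (Fin 2) (Fin 2) ℝ) (s n : ℕ) :
    Matrix (Fin 2) (Fin 2) ℝ :=
  ((List.range n).map fun i => F (s + i)).prod

/-- The transfer matrix
`𝔄(z) = a(z,c₁;p₀,q₀) ⋯ a(z,c_g;p_{g−1},q_{g−1}) · a(z;p_g,q_g)`. -/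
noncomputable def transferM (g : ℕ) (c p q : ℕ → ℝ) (z : ℝ) : Matrix (Fin 2) (Fin 2) ℝ :=
  prodBP (fun j => bpa z (c (j + 1)) (p j) (q j)) 0 g * bpinf z (p g) (q g)

def Nmat (p q : ℝ) : Matrix (Fin 2) (Fin 2) ℝ :=
  (!![p; q] : Matrix (Fin 2) (Fin 1) ℝ) * (!![p, q] : Matrix (Fin 1) (Fin 2) ℝ) * jmat

lemma bpa_eq (z c p q : ℝ) : bpa z c p q = 1 + (z - c)⁻¹ • Nmat p q := by
  rw [bpa, Nmat, show (c - z)⁻¹ = -(z - c)⁻¹ by rw [← neg_sub z c, inv_neg], neg_smul,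
    sub_neg_eq_add]

lemma prodBP_zero (F : ℕ → Matrix (Fin 2) (Fin 2) ℝ) (s : ℕ) : prodBP F s 0 = 1 := by
  simp [prodBP]

lemma prodBP_succ (F : ℕ → Matrix (Fin 2) (Fin 2) ℝ) (s n : ℕ) :
    prodBP F s (n + 1) = F s * prodBP F (s + 1) n := by
  unfold prodBP
  rw [List.range_succ_eq_map, List.map_cons, List.prod_cons, List.map_map,
    show ((fun i => F (s + i)) ∘ Nat.succ) = fun i => F ((s+1) + i) from
      funext fun i => by show F (s + (i+1)) = F (s+1+i); rw [Nat.add_assoc, Nat.add_comm 1 i, ← Nat.add_assoc]]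
  rfl

noncomputable def Amat (r : ℝ) : Matrix (Fin 2) (Fin 2) ℝ := !![0, 0; 0, r⁻¹]

noncomputable def Bcmat (r w : ℝ) : Matrix (Fin 2) (Fin 2) ℝ :=
  !![0, -r; 1 / r, -(r * w) / r]

noncomputable def Mfull (g : ℕ) (c p q : ℕ → ℝ) (k : ℕ) (z : ℝ) :
    Matrix (Fin 2) (Fin 2) ℝ :=
  prodBP (fun j => bpa z (c (j + 1)) (p j) (q j)) k (g - k) * bpinf z (p g) (q g)

noncomputable def Cmat (g : ℕ) (c p q : ℕ → ℝ) (k s : ℕ) : Matrix (Fin 2) (Fin 2) ℝ :=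
  prodBP (fun j => bpa (c k) (c (j + 1)) (p j) (q j)) s (k - 1 - s) *
    (-(Nmat (p (k - 1)) (q (k - 1)) * Mfull g c p q k (c k)))

lemma bpinf_eq (z r w : ℝ) : bpinf z r w = z • Amat r + Bcmat r w := by
  ext i j
  fin_cases i <;> fin_cases j <;>
    simp [bpinf, Amat, Bcmat, Matrix.add_apply, Matrix.smul_apply] <;> ring

lemma Cmat_succ (g : ℕ) (c p q : ℕ → ℝ) (k s : ℕ) (hk : s + 2 ≤ k) :
    Cmat g c p q k s = bpa (c k) (c (s + 1)) (p s) (q s) * Cmat g c p q k (s + 1) := by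
  rw [Cmat, Cmat, show k - 1 - s = (k - 1 - (s + 1)) + 1 by omega, prodBP_succ, Matrix.mul_assoc]

lemma key (g : ℕ) (c p q : ℕ → ℝ)
    (hc : ∀ i j, 1 ≤ i → i ≤ g → 1 ≤ j → j ≤ g → c i = c j → i = j) :
    ∀ n s, s + n = g → ∀ z : ℝ, (∀ j, s < j → j ≤ g → z ≠ c j) →
      Mfull g c p q s z =
        z • Amat (p g) + Bcmat (p g) (q g) +
          (∑ j ∈ Finset.Ico s g, Nmat (p j) (q j) * Amat (p g)) +
          ∑ k ∈ Finset.Icc (s + 1) g, (c k - z)⁻¹ • Cmat g c p q k s := by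
  intro n
  induction n with
  | zero =>
    intro s hs z hzc
    have hsg : s = g := by omega
    subst hsg
    rw [Mfull, Nat.sub_self, prodBP_zero, one_mul, bpinf_eq]
    rw [Finset.Ico_self, Finset.sum_empty, Finset.Icc_eq_empty (by omega), Finset.sum_empty,
      add_zero, add_zero]
  | succ n ih =>
    intro s hs z hzc
    have hsg : s < g := by omega
    set z' := c (s + 1) with hz'
    set A := Amat (p g) with hA
    have hzz' : z - z' ≠ 0 := sub_ne_zero.mpr (hzc (s + 1) (by omega) (by omega))
    have ih1 := ih (s + 1) (by omega) z (fun j hj1 hj2 => hzc j (by omega) hj2)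
    have hz'c : ∀ j, s + 1 < j → j ≤ g → z' ≠ c j := by
      intro j hj1 hj2 hEq
      have := hc (s + 1) j (by omega) (by omega) (by omega) hj2 hEq
      omega
    have ih2 := ih (s + 1) (by omega) z' hz'c
    have hMf : prodBP (fun j => bpa z (c (j+1)) (p j) (q j)) (s+1) n * bpinf z (p g) (q g)
        = Mfull g c p q (s+1) z := by
      rw [Mfull, show g - (s+1) = n by omega]
    rw [Mfull, show g - s = n + 1 by omega, prodBP_succ, Matrix.mul_assoc, hMf, ih1, bpa_eq]
    -- split the sums on the RHS
    rw [Finset.sum_eq_sum_Ico_succ_bot hsg,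
      show Finset.Icc (s+1) g = Finset.Ico (s+1) (g+1) from (Finset.Ico_add_one_right_eq_Icc _ _).symm,
      Finset.sum_eq_sum_Ico_succ_bot (show s + 1 < g + 1 by omega),
      Finset.Ico_add_one_right_eq_Icc]
    have hC1 : Cmat g c p q (s+1) s = -(Nmat (p s) (q s) * Mfull g c p q (s+1) z') := by
      rw [Cmat, show (s+1) - 1 - s = 0 by omega, prodBP_zero, one_mul]
      norm_num
      rfl
    have hninv : (z' - z)⁻¹ = -(z - z')⁻¹ := by
      rw [show z' - z = -(z - z') by ring, inv_neg]
    rw [← hz', hC1]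
    have hpole : (z' - z)⁻¹ • (-(Nmat (p s) (q s) * Mfull g c p q (s+1) z'))
        = (z - z')⁻¹ • (Nmat (p s) (q s) * Mfull g c p q (s+1) z') := by
      rw [hninv, neg_smul, smul_neg, neg_neg]
    rw [hpole, ih2]
    have hCk : ∀ k ∈ Finset.Icc (s+1+1) g,
        (c k - z)⁻¹ • Cmat g c p q k s
          = (c k - z)⁻¹ • Cmat g c p q k (s+1)
            + ((c k - z)⁻¹ * (c k - z')⁻¹) • (Nmat (p s) (q s) * Cmat g c p q k (s+1)) := by
      intro k hk
      rw [Finset.mem_Icc] at hk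
      rw [Cmat_succ g c p q k s (by omega), bpa_eq, add_mul, one_mul, smul_mul_assoc,
        smul_add, smul_smul]
      try rfl
    rw [Finset.sum_congr rfl hCk, Finset.sum_add_distrib]
    simp only [add_mul, one_mul, smul_mul_assoc, mul_add, Matrix.mul_smul, Finset.mul_sum,
      Finset.smul_sum, smul_smul, smul_add]
    rw [show (z - z')⁻¹ * z = 1 + (z - z')⁻¹ * z' by field_simp; ring]
    simp only [add_smul, one_smul]
    have hS : ∑ k ∈ Finset.Icc (s+1+1) g,
          ((z - z')⁻¹ * (c k - z)⁻¹) • (Nmat (p s) (q s) * Cmat g c p q k (s+1))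
        = ∑ k ∈ Finset.Icc (s+1+1) g,
            (((z - z')⁻¹ * (c k - z')⁻¹) • (Nmat (p s) (q s) * Cmat g c p q k (s+1))
              + ((c k - z)⁻¹ * (c k - z')⁻¹) • (Nmat (p s) (q s) * Cmat g c p q k (s+1))) := by
      refine Finset.sum_congr rfl fun k hk => ?_
      rw [Finset.mem_Icc] at hk
      rw [← add_smul]
      congr 1
      have h1 : c k - z ≠ 0 := sub_ne_zero.mpr ((hzc k (by omega) hk.2).symm)
      have h2 : c k - z' ≠ 0 := sub_ne_zero.mpr ((hz'c k (by omega) hk.2).symm)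
      field_simp
      ring
    simp only [Finset.sum_add_distrib]
    rw [hS, Finset.sum_add_distrib]
    abel

lemma trace_Amat (r : ℝ) : (Amat r).trace = r⁻¹ := by
  simp [Amat, Matrix.trace_fin_two]

lemma trace_Bcmat (r w : ℝ) : (Bcmat r w).trace = -(r * w) / r := by
  simp [Bcmat, Matrix.trace_fin_two]

lemma trace_NA (a b r : ℝ) : (Nmat a b * Amat r).trace = -(a * b * r⁻¹) := by
  simp [Nmat, Amat, jmat, Matrix.trace_fin_two, Matrix.mul_apply, Fin.sum_univ_two]
  left
  ring

lemma traceC' (a b : ℝ) (M L : Matrix (Fin 2) (Fin 2) ℝ) :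
    (L * (-(Nmat a b * M))).trace
      = ((!![-b, a] : Matrix (Fin 1) (Fin 2) ℝ) * M * L *
          (!![a; b] : Matrix (Fin 2) (Fin 1) ℝ)) 0 0 := by
  rw [Matrix.trace_mul_comm, Matrix.neg_mul, Matrix.trace_neg]
  have hrow : (!![a, b] : Matrix (Fin 1) (Fin 2) ℝ) * jmat = !![b, -a] := by
    ext i j
    fin_cases i <;> fin_cases j <;>
      simp [jmat, Matrix.mul_apply, Fin.sum_univ_two]
  have hsplit : Nmat a b * M * L
      = (!![a; b] : Matrix (Fin 2) (Fin 1) ℝ) * ((!![b, -a] : Matrix (Fin 1) (Fin 2) ℝ) * (M * L)) := by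
    rw [Nmat, Matrix.mul_assoc (!![a; b]) (!![a, b]) jmat, hrow]
    simp only [Matrix.mul_assoc]
  rw [hsplit, Matrix.trace_mul_comm, Matrix.trace_fin_one]
  have hneg : (!![-b, a] : Matrix (Fin 1) (Fin 2) ℝ) = -(!![b, -a]) := by
    ext i j
    fin_cases i <;> fin_cases j <;> simp
  rw [hneg]
  simp only [Matrix.neg_mul, Matrix.neg_apply, Matrix.mul_assoc]

/-- Partial fraction expansion of the trace of the transfer matrix:
`tr 𝔄(z) = z/p_g − (Σ_{j=0}^{g} p_j q_j)/p_g + Σ_{k=1}^{g} λ_k/(c_k − z)`, where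
`λ_k = (−q_{k−1}, p_{k−1}) · [∏_{j=k}^{g−1} a(c_k,c_{j+1};p_j,q_j)] · a(c_k;p_g,q_g) ·
[∏_{j=0}^{k−2} a(c_k,c_{j+1};p_j,q_j)] · (p_{k−1}, q_{k−1})ᵀ`. -/
theorem statement4 (g : ℕ) (hg : 1 ≤ g) (c p q : ℕ → ℝ)
    (hc : ∀ i j, 1 ≤ i → i ≤ g → 1 ≤ j → j ≤ g → c i = c j → i = j)
    (hpg : p g ≠ 0)
    (lam : ℕ → ℝ)
    (hlam : ∀ k, 1 ≤ k → k ≤ g →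
      lam k = ((!![-(q (k - 1)), p (k - 1)] : Matrix (Fin 1) (Fin 2) ℝ) *
        prodBP (fun j => bpa (c k) (c (j + 1)) (p j) (q j)) k (g - k) *
        bpinf (c k) (p g) (q g) *
        prodBP (fun j => bpa (c k) (c (j + 1)) (p j) (q j)) 0 (k - 1) *
        (!![p (k - 1); q (k - 1)] : Matrix (Fin 2) (Fin 1) ℝ)) 0 0)
    (z : ℝ) (hz : ∀ j, 1 ≤ j → j ≤ g → z ≠ c j) :
    (transferM g c p q z).trace =
      z / p g - (∑ j ∈ Finset.range (g + 1), p j * q j) / p g +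
        ∑ k ∈ Finset.Icc 1 g, lam k / (c k - z) := by
  have hkey := key g c p q hc g 0 (by omega) z (fun j hj1 hj2 => hz j (by omega) hj2)
  have hM : transferM g c p q z = Mfull g c p q 0 z := rfl
  rw [hM, hkey, Matrix.trace_add, Matrix.trace_add, Matrix.trace_add, Matrix.trace_smul,
    Matrix.trace_sum, Matrix.trace_sum, trace_Amat, trace_Bcmat]
  have h1 : ∀ j ∈ Finset.Ico 0 g,
      (Nmat (p j) (q j) * Amat (p g)).trace = -(p j * q j * (p g)⁻¹) :=
    fun j _ => trace_NA _ _ _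
  rw [Finset.sum_congr rfl h1]
  have h2 : ∀ k ∈ Finset.Icc (0 + 1) g,
      ((c k - z)⁻¹ • Cmat g c p q k 0).trace = lam k / (c k - z) := by
    intro k hk
    rw [Finset.mem_Icc] at hk
    rw [Matrix.trace_smul]
    have htr : (Cmat g c p q k 0).trace = lam k := by
      rw [hlam k hk.1 hk.2]
      have hCm : Cmat g c p q k 0
          = prodBP (fun j => bpa (c k) (c (j + 1)) (p j) (q j)) 0 (k - 1) *
            (-(Nmat (p (k - 1)) (q (k - 1)) * Mfull g c p q k (c k))) := rfl
      rw [hCm, traceC', Mfull]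
      simp only [Matrix.mul_assoc]
    rw [htr, smul_eq_mul, mul_comm, ← div_eq_mul_inv]
  rw [Finset.sum_congr rfl h2, ← Finset.range_eq_Ico, Finset.sum_neg_distrib, ← Finset.sum_mul,
    Finset.sum_range_succ, smul_eq_mul]
  have h3 : Finset.Icc (0 + 1) g = Finset.Icc 1 g := rfl
  rw [h3]
  field_simp
  ring
end

section
/- Let g ≥ 1, let c₁, …, c_g be distinct reals, λ₁, …, λ_g > 0, and set V(x) = Σ_{j=1}^{g} λ_j/(c_j − x). Let y ≠ 0 be real and let x₁, …, x_g be pairwise distinct reals, each different from every c_j, such that V(x_k) = y for all k. Then ∏_{k=1}^{g} V′(x_k) = [∏_{k<j} (x_k − x_j)² (c_k − c_j)² / ∏_{j,k=1}^{g} (c_k − x_j)²] · ∏_{k=1}^{g} λ_k, where V′(x) = Σ_{j=1}^{g} λ_j/(c_j − x)². -/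
open Polynomial Finset

private lemma pairSplit (g : ℕ) (S : Finset ℕ) (hS : S = Finset.Icc 1 g) (f : ℕ → ℕ → ℝ) :
    ∏ k ∈ S, ∏ m ∈ S.erase k, f k m =
    ∏ k ∈ S, ∏ m ∈ Finset.Icc (k+1) g, (f k m * f m k) := by
  subst hS
  have herase : ∀ k ∈ Finset.Icc 1 g, (Finset.Icc 1 g).erase k
      = Finset.Icc 1 (k-1) ∪ Finset.Icc (k+1) g := by
    intro k hk
    simp only [Finset.mem_Icc] at hk
    ext m
    simp only [Finset.mem_erase, Finset.mem_Icc, Finset.mem_union]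
    omega
  rw [Finset.prod_congr rfl fun k hk => by
    rw [herase k hk, Finset.prod_union (by
      simp only [Finset.disjoint_left, Finset.mem_Icc]; intro a ha hb; omega)]]
  rw [Finset.prod_mul_distrib]
  have hswap : ∏ k ∈ Finset.Icc 1 g, ∏ m ∈ Finset.Icc 1 (k-1), f k m
      = ∏ m ∈ Finset.Icc 1 g, ∏ k ∈ Finset.Icc (m+1) g, f k m := by
    apply Finset.prod_comm'
    intro k m
    simp only [Finset.mem_Icc]
    omega
  rw [hswap, mul_comm, ← Finset.prod_mul_distrib]
  exact Finset.prod_congr rfl fun k _ => (Finset.prod_mul_distrib).symm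




/-- For `V(x) = Σ_{j=1}^{g} λ_j/(c_j − x)` with distinct poles and
positive `λ_j`, and pairwise distinct non-pole preimages `x₁,…,x_g` of a value `y ≠ 0`,
the product of the derivatives `V′(x_k) = Σ_j λ_j/(c_j − x_k)²` satisfies
`∏_k V′(x_k) = [∏_{k<j}(x_k−x_j)²(c_k−c_j)² / ∏_{j,k}(c_k−x_j)²] · ∏_k λ_k`. -/
theorem statement9 (g : ℕ) (hg : 1 ≤ g) (c lam x : ℕ → ℝ)
    (hc : ∀ i j, 1 ≤ i → i ≤ g → 1 ≤ j → j ≤ g → c i = c j → i = j)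
    (hlam : ∀ j, 1 ≤ j → j ≤ g → 0 < lam j)
    (y : ℝ) (hy : y ≠ 0)
    (hx : ∀ i j, 1 ≤ i → i ≤ g → 1 ≤ j → j ≤ g → x i = x j → i = j)
    (hxc : ∀ k j, 1 ≤ k → k ≤ g → 1 ≤ j → j ≤ g → x k ≠ c j)
    (hV : ∀ k, 1 ≤ k → k ≤ g → ∑ j ∈ Finset.Icc 1 g, lam j / (c j - x k) = y) :
    ∏ k ∈ Finset.Icc 1 g, (∑ j ∈ Finset.Icc 1 g, lam j / (c j - x k) ^ 2) =
      ((∏ k ∈ Finset.Icc 1 g, ∏ j ∈ Finset.Icc (k + 1) g,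
          (x k - x j) ^ 2 * (c k - c j) ^ 2) /
        ∏ j ∈ Finset.Icc 1 g, ∏ k ∈ Finset.Icc 1 g, (c k - x j) ^ 2) *
      ∏ k ∈ Finset.Icc 1 g, lam k := by
  classical
  set S : Finset ℕ := Finset.Icc 1 g with hS
  have hcardS : S.card = g := by simp [hS]
  have hmem : ∀ {i : ℕ}, i ∈ S ↔ 1 ≤ i ∧ i ≤ g := by
    intro i; simp [hS]
  -- basic nonvanishing
  have hcx0 : ∀ j ∈ S, ∀ k ∈ S, c j - x k ≠ 0 := by
    intro j hj k hk
    rw [hmem] at hj hk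
    exact sub_ne_zero.mpr fun h => hxc k j hk.1 hk.2 hj.1 hj.2 h.symm
  have hcc0 : ∀ i ∈ S, ∀ j ∈ S, i ≠ j → c j - c i ≠ 0 := by
    intro i hi j hj hij
    rw [hmem] at hi hj
    exact sub_ne_zero.mpr fun h => hij (hc j i hj.1 hj.2 hi.1 hi.2 h).symm
  -- the polynomials
  set Q : Polynomial ℝ := ∏ j ∈ S, (C (c j) - X) with hQ
  set P : Polynomial ℝ := C y * Q - ∑ j ∈ S, C (lam j) * ∏ i ∈ S.erase j, (C (c i) - X) with hP
  set R : Polynomial ℝ := C y * ∏ k ∈ S, (C (x k) - X) with hR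
  have hfac0 : ∀ a : ℝ, (C a - X : Polynomial ℝ) ≠ 0 := by
    intro a h
    have := congrArg (fun p => Polynomial.coeff p 1) h
    simp at this
  have hdeg1 : ∀ a : ℝ, (C a - X : Polynomial ℝ).natDegree = 1 := by
    intro a
    rw [show (C a - X : Polynomial ℝ) = -(X - C a) by ring, natDegree_neg, natDegree_X_sub_C]
  have hdegprod : ∀ (T : Finset ℕ) (v : ℕ → ℝ),
      (∏ j ∈ T, (C (v j) - X : Polynomial ℝ)).natDegree = T.card := by
    intro T v
    rw [natDegree_prod _ _ fun i _ => hfac0 (v i)]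
    simp [hdeg1]
  have hcoefftop : ∀ (T : Finset ℕ) (v : ℕ → ℝ),
      (∏ j ∈ T, (C (v j) - X : Polynomial ℝ)).coeff T.card = (-1) ^ T.card := by
    intro T v
    have h1 : (∏ j ∈ T, (C (v j) - X : Polynomial ℝ))
        = (-1) ^ T.card * ∏ j ∈ T, (X - C (v j)) := by
      rw [← Finset.prod_const, ← Finset.prod_mul_distrib]
      exact Finset.prod_congr rfl fun j _ => by ring
    rw [h1]
    have hm : (∏ j ∈ T, (X - C (v j) : Polynomial ℝ)).Monic :=
      monic_prod_of_monic _ _ fun j _ => monic_X_sub_C (v j)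
    have hd : (∏ j ∈ T, (X - C (v j) : Polynomial ℝ)).natDegree = T.card := by
      rw [natDegree_prod _ _ fun i _ => (monic_X_sub_C (v i)).ne_zero]
      simp
    have := hm.coeff_natDegree
    rw [hd] at this
    rw [show ((-1 : Polynomial ℝ) ^ T.card) = C ((-1 : ℝ) ^ T.card) by simp,
      coeff_C_mul, this, mul_one]
  -- P = R
  have hPR : P = R := by
    have hDzero : P - R = 0 := by
      apply eq_zero_of_natDegree_lt_card_of_eval_eq_zero' (P - R) (S.image x)
      · intro t ht
        obtain ⟨k, hk, rfl⟩ := Finset.mem_image.mp ht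
        have hk' := hmem.mp hk
        have hQev : Q.eval (x k) = ∏ j ∈ S, (c j - x k) := by
          rw [hQ, eval_prod]; simp
        have hRev : R.eval (x k) = 0 := by
          rw [hR]
          simp only [eval_mul, eval_prod, eval_sub, eval_C, eval_X]
          rw [Finset.prod_eq_zero hk (by ring)]
          ring
        have hPev : P.eval (x k) = 0 := by
          rw [hP]
          simp only [eval_sub, eval_mul, eval_C, eval_finset_sum, eval_prod, eval_sub, eval_X]
          rw [hQev]
          have hterm : ∀ j ∈ S, lam j * ∏ i ∈ S.erase j, (c i - x k)
              = (lam j / (c j - x k)) * ∏ i ∈ S, (c i - x k) := by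
            intro j hj
            have h0 := hcx0 j hj k hk
            rw [← Finset.mul_prod_erase S _ hj]
            field_simp
          rw [Finset.sum_congr rfl hterm, ← Finset.sum_mul, hV k hk'.1 hk'.2]
          ring
        simp [eval_sub, hPev, hRev]
      · have hcard : (S.image x).card = g := by
          rw [Finset.card_image_of_injOn, hcardS]
          intro i hi j hj hij
          rw [Finset.mem_coe, hmem] at hi
          rw [Finset.mem_coe, hmem] at hj
          exact hx i j hi.1 hi.2 hj.1 hj.2 hij
        rw [hcard]
        have hdP : P.natDegree ≤ g := by
          apply le_trans (natDegree_sub_le _ _)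
          rw [max_le_iff]
          constructor
          · apply le_trans (natDegree_mul_le)
            rw [natDegree_C, hQ, hdegprod, hcardS]
            omega
          · apply le_trans (natDegree_sum_le _ _)
            rw [Finset.fold_max_le]
            refine ⟨Nat.zero_le _, fun j hj => ?_⟩
            apply le_trans (natDegree_mul_le)
            rw [natDegree_C, hdegprod, Finset.card_erase_of_mem hj, hcardS]
            omega
        have hdR : R.natDegree ≤ g := by
          rw [hR]
          apply le_trans (natDegree_mul_le)
          rw [natDegree_C, hdegprod, hcardS]
          omega
        have hsumdeg : (∑ j ∈ S, C (lam j) * ∏ i ∈ S.erase j, (C (c i) - X)).natDegree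
            ≤ g - 1 := by
          apply le_trans (natDegree_sum_le _ _)
          rw [Finset.fold_max_le]
          refine ⟨Nat.zero_le _, fun j hj => ?_⟩
          apply le_trans (natDegree_mul_le)
          rw [natDegree_C, hdegprod, Finset.card_erase_of_mem hj, hcardS]
          omega
        have hQg : Q.coeff g = (-1 : ℝ) ^ g := by
          have := hcoefftop S c
          rwa [hcardS] at this
        have hXg : (∏ k ∈ S, (C (x k) - X)).coeff g = (-1 : ℝ) ^ g := by
          have := hcoefftop S x
          rwa [hcardS] at this
        have h2 : (∑ j ∈ S, C (lam j) * ∏ i ∈ S.erase j, (C (c i) - X)).coeff g = 0 := by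
          apply coeff_eq_zero_of_natDegree_lt
          omega
        have hPc : P.coeff g = y * (-1) ^ g := by
          rw [hP, coeff_sub, coeff_C_mul, hQg, h2, sub_zero]
        have hRc : R.coeff g = y * (-1) ^ g := by
          rw [hR, coeff_C_mul, hXg]
        have hcoeff : (P - R).coeff g = 0 := by
          rw [coeff_sub, hPc, hRc, sub_self]
        by_contra hle
        push_neg at hle
        have hdd : (P - R).natDegree ≤ g := le_trans (natDegree_sub_le _ _) (max_le hdP hdR)
        have heq : (P - R).natDegree = g := le_antisymm hdd hle
        have hne : P - R ≠ 0 := by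
          intro h0
          rw [h0] at heq
          simp at heq
          omega
        exact hne (leadingCoeff_eq_zero.mp (by rw [leadingCoeff, heq, hcoeff]))
    exact sub_eq_zero.mp hDzero
  -- Step B: lambda formula
  have hCc0 : ∀ i ∈ S, ∏ j ∈ S.erase i, (c j - c i) ≠ 0 := fun i hi =>
    Finset.prod_ne_zero_iff.mpr fun j hj =>
      hcc0 i hi j (Finset.mem_of_mem_erase hj) (Finset.ne_of_mem_erase hj).symm
  have hlamf : ∀ i ∈ S, lam i * ∏ j ∈ S.erase i, (c j - c i)
      = -(y * ∏ k ∈ S, (x k - c i)) := by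
    intro i hi
    have hev := congrArg (Polynomial.eval (c i)) hPR
    simp only [hP, hQ, hR, eval_sub, eval_mul, eval_C, eval_finset_sum, eval_prod,
      eval_X] at hev
    rw [Finset.prod_eq_zero (f := fun j => c j - c i) hi (sub_self (c i))] at hev
    rw [Finset.sum_eq_single_of_mem i hi (fun j hj hji => by
      rw [Finset.prod_eq_zero (f := fun m => c m - c i)
        (Finset.mem_erase.mpr ⟨Ne.symm hji, hi⟩) (sub_self (c i)), mul_zero])] at hev
    linarith [hev]
  -- Step C: derivative identity
  have hderiv : ∀ k ∈ S, ∑ j ∈ S, lam j / (c j - x k) * ∏ i ∈ S.erase j, (c i - x k)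
      = y * ∏ m ∈ S.erase k, (x m - x k) := by
    intro k hk
    have hk' := hmem.mp hk
    set E : Polynomial ℝ := ∑ j ∈ S, C (lam j / (c j - x k)) * ∏ i ∈ S.erase j,
      (C (c i) - X) with hE
    set Dp : Polynomial ℝ := C y * ∏ m ∈ S.erase k, (C (x m) - X) with hDp
    have hED : E = Dp := by
      apply Polynomial.eq_of_infinite_eval_eq
      refine ((Set.finite_singleton (x k)).infinite_compl).mono fun t ht => ?_
      simp only [Set.mem_compl_iff, Set.mem_singleton_iff] at ht
      have hxkt : x k - t ≠ 0 := sub_ne_zero.mpr (Ne.symm ht)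
      show Polynomial.eval t E = Polynomial.eval t Dp
      apply mul_right_cancel₀ hxkt
      have hevE : Polynomial.eval t E
          = ∑ j ∈ S, lam j / (c j - x k) * ∏ i ∈ S.erase j, (c i - t) := by
        simp [hE, eval_finset_sum, eval_prod]
      have hevD : Polynomial.eval t Dp = y * ∏ m ∈ S.erase k, (x m - t) := by
        simp [hDp, eval_prod]
      have hPt : Polynomial.eval t P
          = y * ∏ j ∈ S, (c j - t) - ∑ j ∈ S, lam j * ∏ i ∈ S.erase j, (c i - t) := by
        simp [hP, hQ, eval_prod, eval_finset_sum]
      have hRt : Polynomial.eval t R = y * ∏ m ∈ S, (x m - t) := by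
        simp [hR, eval_prod]
      rw [hevE, hevD]
      calc (∑ j ∈ S, lam j / (c j - x k) * ∏ i ∈ S.erase j, (c i - t)) * (x k - t)
          = ∑ j ∈ S, (lam j / (c j - x k) * ((c j - t) * ∏ i ∈ S.erase j, (c i - t))
              - lam j * ∏ i ∈ S.erase j, (c i - t)) := by
            rw [Finset.sum_mul]
            refine Finset.sum_congr rfl fun j hj => ?_
            have h0 := hcx0 j hj k hk
            field_simp
            ring
        _ = (∑ j ∈ S, lam j / (c j - x k)) * ∏ i ∈ S, (c i - t)
              - ∑ j ∈ S, lam j * ∏ i ∈ S.erase j, (c i - t) := by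
            rw [Finset.sum_sub_distrib, Finset.sum_mul]
            congr 1
            refine Finset.sum_congr rfl fun j hj => ?_
            rw [← Finset.mul_prod_erase S (fun i => c i - t) hj]
        _ = y * ∏ i ∈ S, (c i - t) - ∑ j ∈ S, lam j * ∏ i ∈ S.erase j, (c i - t) := by
            rw [hV k hk'.1 hk'.2]
        _ = Polynomial.eval t P := hPt.symm
        _ = Polynomial.eval t R := by rw [hPR]
        _ = y * ((x k - t) * ∏ m ∈ S.erase k, (x m - t)) := by
            rw [hRt, Finset.mul_prod_erase S (fun m => x m - t) hk]
        _ = (y * ∏ m ∈ S.erase k, (x m - t)) * (x k - t) := by ring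
    have hfin := congrArg (Polynomial.eval (x k)) hED
    simpa [hE, hDp, eval_finset_sum, eval_prod] using hfin
  -- Step D: value of the derivative at x k
  have hQk0 : ∀ k ∈ S, ∏ j ∈ S, (c j - x k) ≠ 0 := fun k hk =>
    Finset.prod_ne_zero_iff.mpr fun j hj => hcx0 j hj k hk
  have hVp : ∀ k ∈ S, (∑ j ∈ S, lam j / (c j - x k) ^ 2)
      = y * (∏ m ∈ S.erase k, (x m - x k)) / ∏ j ∈ S, (c j - x k) := by
    intro k hk
    rw [eq_div_iff (hQk0 k hk), ← hderiv k hk, Finset.sum_mul]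
    refine Finset.sum_congr rfl fun j hj => ?_
    have h0 := hcx0 j hj k hk
    rw [← Finset.mul_prod_erase S (fun i => c i - x k) hj]
    field_simp
  -- assembling products
  have hA0 : (∏ k ∈ S, ∏ j ∈ S, (c j - x k)) ≠ 0 :=
    Finset.prod_ne_zero_iff.mpr fun k hk => hQk0 k hk
  have hPC0 : (∏ i ∈ S, ∏ j ∈ S.erase i, (c j - c i)) ≠ 0 :=
    Finset.prod_ne_zero_iff.mpr fun i hi => hCc0 i hi
  have hprodV : ∏ k ∈ S, (∑ j ∈ S, lam j / (c j - x k) ^ 2)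
      = y ^ g * (∏ k ∈ S, ∏ m ∈ S.erase k, (x m - x k))
        / ∏ k ∈ S, ∏ j ∈ S, (c j - x k) := by
    rw [Finset.prod_congr rfl hVp, Finset.prod_div_distrib, Finset.prod_mul_distrib,
      Finset.prod_const, hcardS]
  have hsign : (-1 : ℝ) ^ g * ((-1 : ℝ) ^ g) ^ g = 1 := by
    rcases Nat.even_or_odd g with h | h
    · simp [h.neg_one_pow]
    · simp [h.neg_one_pow]
  have hinner : ∀ i, ∏ k ∈ S, (x k - c i) = (-1 : ℝ) ^ g * ∏ k ∈ S, (c i - x k) := by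
    intro i
    rw [← hcardS, ← Finset.prod_const, ← Finset.prod_mul_distrib]
    exact Finset.prod_congr rfl fun k _ => by ring
  have hMA : ∏ i ∈ S, ∏ k ∈ S, (x k - c i)
      = ((-1 : ℝ) ^ g) ^ g * ∏ i ∈ S, ∏ k ∈ S, (c i - x k) := by
    rw [Finset.prod_congr rfl fun i _ => hinner i, Finset.prod_mul_distrib,
      Finset.prod_const, hcardS]
  have hprodlam : ∏ i ∈ S, lam i
      = y ^ g * (∏ i ∈ S, ∏ k ∈ S, (c i - x k))
        / ∏ i ∈ S, ∏ j ∈ S.erase i, (c j - c i) := by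
    have h1 : ∏ i ∈ S, lam i
        = (∏ i ∈ S, -(y * ∏ k ∈ S, (x k - c i)))
          / ∏ i ∈ S, ∏ j ∈ S.erase i, (c j - c i) := by
      rw [← Finset.prod_div_distrib]
      refine Finset.prod_congr rfl fun i hi => ?_
      rw [eq_div_iff (hCc0 i hi)]
      exact hlamf i hi
    have h2 : ∏ i ∈ S, -(y * ∏ k ∈ S, (x k - c i))
        = (-1 : ℝ) ^ g * y ^ g * ∏ i ∈ S, ∏ k ∈ S, (x k - c i) := by
      rw [← hcardS, ← Finset.prod_const (-1 : ℝ), ← Finset.prod_const y,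
        ← Finset.prod_mul_distrib, ← Finset.prod_mul_distrib]
      refine Finset.prod_congr rfl fun i hi => by ring
    rw [h1, h2, hMA]
    rw [show (-1 : ℝ) ^ g * y ^ g * (((-1 : ℝ) ^ g) ^ g * ∏ i ∈ S, ∏ k ∈ S, (c i - x k))
      = ((-1 : ℝ) ^ g * ((-1 : ℝ) ^ g) ^ g) * (y ^ g * ∏ i ∈ S, ∏ k ∈ S, (c i - x k))
      by ring, hsign, one_mul]
  have hNum : (∏ k ∈ S, ∏ j ∈ Finset.Icc (k+1) g, (x k - x j) ^ 2 * (c k - c j) ^ 2)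
      = (∏ k ∈ S, ∏ m ∈ S.erase k, (x m - x k))
        * (∏ k ∈ S, ∏ m ∈ S.erase k, (c m - c k)) := by
    rw [pairSplit g S hS (fun k m => x m - x k), pairSplit g S hS (fun k m => c m - c k),
      ← Finset.prod_mul_distrib]
    refine Finset.prod_congr rfl fun k hk => ?_
    rw [← Finset.prod_mul_distrib]
    exact Finset.prod_congr rfl fun m hm => by ring
  have hDen : (∏ j ∈ S, ∏ k ∈ S, (c k - x j) ^ 2)
      = (∏ k ∈ S, ∏ j ∈ S, (c j - x k)) ^ 2 := by
    rw [← Finset.prod_pow]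
    exact Finset.prod_congr rfl fun j hj => Finset.prod_pow _ _ _
  have hcomm : ∏ i ∈ S, ∏ k ∈ S, (c i - x k) = ∏ k ∈ S, ∏ j ∈ S, (c j - x k) :=
    Finset.prod_comm
  rw [hprodV, hNum, hDen, hprodlam, hcomm]
  field_simp
end

section
/- Let g ≥ 1, let c₁, …, c_g be distinct reals, λ₁, …, λ_g > 0, and set V(x) = Σ_{j=1}^{g} λ_j/(c_j − x). Let y ≠ 0 be real and let x₁, …, x_g be pairwise distinct reals, each different from every c_j, such that V(x_k) = y for all k. For each k let w_k ∈ ℝ^g be the vector with j-th component 1/(c_j − x_k). Then for any reals s₁, …, s_g: det( Σ_{k=1}^{g} (s_k / V′(x_k)) · w_k w_kᵀ ) = (∏_{k=1}^{g} s_k) / (∏_{k=1}^{g} λ_k), where V′(x) = Σ_{j=1}^{g} λ_j/(c_j − x)². -/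
private lemma sum_Icc_fin (g : ℕ) (f : ℕ → ℝ) :
    ∑ j ∈ Finset.Icc 1 g, f j = ∑ j : Fin g, f ((j : ℕ) + 1) := by
  rw [← Finset.Ico_add_one_right_eq_Icc, Finset.sum_Ico_eq_sum_range,
    Fin.sum_univ_eq_sum_range (fun i => f (i + 1)) g]
  simp [add_comm]

private lemma prod_Icc_fin (g : ℕ) (f : ℕ → ℝ) :
    ∏ j ∈ Finset.Icc 1 g, f j = ∏ j : Fin g, f ((j : ℕ) + 1) := by
  rw [← Finset.Ico_add_one_right_eq_Icc, Finset.prod_Ico_eq_prod_range,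
    Fin.prod_univ_eq_prod_range (fun i => f (i + 1)) g]
  simp [add_comm]

/-- For `V(x) = Σ_{j=1}^{g} λ_j/(c_j − x)` with distinct poles and
positive `λ_j`, pairwise distinct non-pole preimages `x₁,…,x_g` of a value `y ≠ 0`,
and vectors `w_k = (1/(c_j − x_k))_{j=1}^{g}`, one has for any reals `s₁,…,s_g`:
`det( Σ_k (s_k / V′(x_k)) · w_k w_kᵀ ) = (∏_k s_k)/(∏_k λ_k)`,
where `V′(x) = Σ_j λ_j/(c_j − x)²`. -/
theorem statement10 (g : ℕ) (hg : 1 ≤ g) (c lam x : ℕ → ℝ)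
    (hc : ∀ i j, 1 ≤ i → i ≤ g → 1 ≤ j → j ≤ g → c i = c j → i = j)
    (hlam : ∀ j, 1 ≤ j → j ≤ g → 0 < lam j)
    (y : ℝ) (hy : y ≠ 0)
    (hx : ∀ i j, 1 ≤ i → i ≤ g → 1 ≤ j → j ≤ g → x i = x j → i = j)
    (hxc : ∀ k j, 1 ≤ k → k ≤ g → 1 ≤ j → j ≤ g → x k ≠ c j)
    (hV : ∀ k, 1 ≤ k → k ≤ g → ∑ j ∈ Finset.Icc 1 g, lam j / (c j - x k) = y)
    (s : ℕ → ℝ)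
    (M : Matrix (Fin g) (Fin g) ℝ)
    (hM : M = ∑ k ∈ Finset.Icc 1 g,
      (s k / ∑ j ∈ Finset.Icc 1 g, lam j / (c j - x k) ^ 2) •
        Matrix.of fun i j : Fin g =>
          (1 / (c ((i : ℕ) + 1) - x k)) * (1 / (c ((j : ℕ) + 1) - x k))) :
    M.det = (∏ k ∈ Finset.Icc 1 g, s k) / ∏ k ∈ Finset.Icc 1 g, lam k := by
  haveI : NeZero g := ⟨by omega⟩
  -- basic index facts
  have hmem : ∀ i : Fin g, 1 ≤ (i : ℕ) + 1 ∧ (i : ℕ) + 1 ≤ g := fun i => ⟨by omega, i.2⟩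
  -- nonvanishing of c_j − x_k
  have hcx : ∀ (j k : Fin g), c ((j : ℕ) + 1) - x ((k : ℕ) + 1) ≠ 0 := by
    intro j k h
    exact hxc ((k : ℕ) + 1) ((j : ℕ) + 1) (hmem k).1 (hmem k).2 (hmem j).1 (hmem j).2
      (by linarith [sub_eq_zero.mp h])
  -- distinctness of the x's
  have hxx : ∀ (k l : Fin g), k ≠ l → x ((k : ℕ) + 1) - x ((l : ℕ) + 1) ≠ 0 := by
    intro k l hkl h
    apply hkl
    have := hx ((k : ℕ) + 1) ((l : ℕ) + 1) (hmem k).1 (hmem k).2 (hmem l).1 (hmem l).2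
      (sub_eq_zero.mp h)
    exact Fin.ext (by omega)
  -- the Cauchy-type matrix
  set W : Matrix (Fin g) (Fin g) ℝ :=
    Matrix.of (fun i k : Fin g => 1 / (c ((i : ℕ) + 1) - x ((k : ℕ) + 1))) with hW
  -- V'(x_k)
  set v : Fin g → ℝ :=
    (fun k : Fin g => ∑ j : Fin g, lam ((j : ℕ) + 1) / (c ((j : ℕ) + 1) - x ((k : ℕ) + 1)) ^ 2)
    with hv
  have hvpos : ∀ k, 0 < v k := by
    intro k
    apply Finset.sum_pos
    · intro j _
      exact div_pos (hlam _ (hmem j).1 (hmem j).2) (pow_two_pos_of_ne_zero (hcx j k))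
    · exact Finset.univ_nonempty
  have hvne : ∀ k, v k ≠ 0 := fun k => ne_of_gt (hvpos k)
  -- V(x_k) = y, in Fin form
  have hVf : ∀ k : Fin g,
      ∑ j : Fin g, lam ((j : ℕ) + 1) / (c ((j : ℕ) + 1) - x ((k : ℕ) + 1)) = y := by
    intro k
    have h := hV ((k : ℕ) + 1) (hmem k).1 (hmem k).2
    rwa [sum_Icc_fin g (fun n => lam n / (c n - x ((k : ℕ) + 1)))] at h
  -- M = W * diag(d) * Wᵀ
  have hMeq : M = W * Matrix.diagonal (fun k : Fin g => s ((k : ℕ) + 1) / v k) * W.transpose := by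
    rw [hM]
    ext i j
    rw [Matrix.mul_apply, Matrix.sum_apply, sum_Icc_fin g
      (fun k => ((s k / ∑ j ∈ Finset.Icc 1 g, lam j / (c j - x k) ^ 2) •
        Matrix.of fun i j : Fin g =>
          (1 / (c ((i : ℕ) + 1) - x k)) * (1 / (c ((j : ℕ) + 1) - x k))) i j)]
    apply Finset.sum_congr rfl
    intro k _
    rw [Matrix.mul_diagonal, Matrix.smul_apply, smul_eq_mul]
    simp only [Matrix.of_apply, Matrix.transpose_apply, hW, hv, sum_Icc_fin g
      (fun j => lam j / (c j - x ((k : ℕ) + 1)) ^ 2)]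
    ring
  -- Wᵀ * diag(λ) * W = diag(v)
  have hkey : W.transpose * Matrix.diagonal (fun j : Fin g => lam ((j : ℕ) + 1)) * W
      = Matrix.diagonal v := by
    ext k l
    rw [Matrix.mul_apply]
    simp only [Matrix.mul_diagonal, Matrix.transpose_apply]
    by_cases hkl : k = l
    · subst hkl
      rw [Matrix.diagonal_apply_eq, hv]
      apply Finset.sum_congr rfl
      intro j _
      have := hcx j k
      simp only [hW, Matrix.of_apply]
      field_simp
    · rw [Matrix.diagonal_apply_ne _ hkl]
      have hu := hxx k l hkl
      have : ∀ j : Fin g, W j k * lam ((j : ℕ) + 1) * W j l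
          = (lam ((j : ℕ) + 1) / (c ((j : ℕ) + 1) - x ((k : ℕ) + 1))
            - lam ((j : ℕ) + 1) / (c ((j : ℕ) + 1) - x ((l : ℕ) + 1)))
            * (x ((k : ℕ) + 1) - x ((l : ℕ) + 1))⁻¹ := by
        intro j
        have h1 := hcx j k
        have h2 := hcx j l
        simp only [hW, Matrix.of_apply]
        field_simp
        ring
      rw [Finset.sum_congr rfl (fun j _ => this j), ← Finset.sum_mul,
        Finset.sum_sub_distrib, hVf k, hVf l]
      simp
  -- determinant bookkeeping
  have hdet1 : W.det * W.det * ∏ j : Fin g, lam ((j : ℕ) + 1) = ∏ k : Fin g, v k := by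
    have := congrArg Matrix.det hkey
    rw [Matrix.det_mul, Matrix.det_mul, Matrix.det_transpose, Matrix.det_diagonal,
      Matrix.det_diagonal] at this
    linarith [this]
  have hdetM : M.det = W.det * W.det * ∏ k : Fin g, (s ((k : ℕ) + 1) / v k) := by
    rw [hMeq, Matrix.det_mul, Matrix.det_mul, Matrix.det_transpose, Matrix.det_diagonal]
    ring
  have hlamne : ∀ j : Fin g, lam ((j : ℕ) + 1) ≠ 0 :=
    fun j => ne_of_gt (hlam _ (hmem j).1 (hmem j).2)
  have hprodv : (∏ k : Fin g, v k) ≠ 0 := Finset.prod_ne_zero_iff.mpr fun k _ => hvne k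
  have hprodl : (∏ j : Fin g, lam ((j : ℕ) + 1)) ≠ 0 :=
    Finset.prod_ne_zero_iff.mpr fun j _ => hlamne j
  rw [prod_Icc_fin g s, prod_Icc_fin g lam, hdetM]
  have hW2 : W.det * W.det = (∏ k : Fin g, v k) / ∏ j : Fin g, lam ((j : ℕ) + 1) := by
    field_simp
    linarith [hdet1]
  rw [hW2, Finset.prod_div_distrib]
  field_simp
end

section
/- Let η > 0 and let ψ, ψ̃, τ, τ̃ : ℕ → ℝ be sequences such that for all n: cos ψ_n ≥ η, cos ψ̃_n ≥ η, η ≤ τ_n ≤ 1/η, and η ≤ τ̃_n ≤ 1/η. Assume that the four sequences n ↦ τ_n sin ψ_n − sin ψ̃_n, n ↦ τ_n cos ψ_n − τ̃_n cos ψ̃_n, n ↦ cos ψ_n − cos ψ̃_n, and n ↦ −sin ψ_n + τ̃_n sin ψ̃_n are all square-summable. Then the sequences n ↦ sin ψ_n − sin ψ̃_n and n ↦ cos ψ_n − cos ψ̃_n are square-summable (equivalently, {e^{iψ_n} − e^{iψ̃_n}} ∈ ℓ²). -/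
private lemma l2_add (f g : ℕ → ℝ) (hf : Summable fun n => (f n) ^ 2)
    (hg : Summable fun n => (g n) ^ 2) : Summable fun n => (f n + g n) ^ 2 := by
  refine Summable.of_nonneg_of_le (fun n => sq_nonneg _) (fun n => ?_)
    ((hf.mul_left 2).add (hg.mul_left 2))
  nlinarith [sq_nonneg (f n - g n)]

private lemma l2_mul (c f : ℕ → ℝ) (M : ℝ) (hc : ∀ n, |c n| ≤ M)
    (hf : Summable fun n => (f n) ^ 2) : Summable fun n => (c n * f n) ^ 2 := by
  refine Summable.of_nonneg_of_le (fun n => sq_nonneg _) (fun n => ?_) (hf.mul_left (M ^ 2))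
  have h1 := hc n
  have h2 := abs_nonneg (c n)
  have h3 : (c n) ^ 2 ≤ M ^ 2 := by nlinarith [sq_abs (c n)]
  nlinarith [sq_nonneg (f n)]

/-- If `cos ψ_n, cos ψ̃_n ≥ η > 0` and `η ≤ τ_n, τ̃_n ≤ 1/η`, and the
four sequences `τ_n sin ψ_n − sin ψ̃_n`, `τ_n cos ψ_n − τ̃_n cos ψ̃_n`,
`cos ψ_n − cos ψ̃_n`, `−sin ψ_n + τ̃_n sin ψ̃_n` are square-summable, then the
sequences `sin ψ_n − sin ψ̃_n` and `cos ψ_n − cos ψ̃_n` are square-summable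
(equivalently `{e^{iψ_n} − e^{iψ̃_n}} ∈ ℓ²`). -/
theorem statement11 (η : ℝ) (hη : 0 < η) (ψ ψt τ τt : ℕ → ℝ)
    (hcψ : ∀ n, η ≤ Real.cos (ψ n)) (hcψt : ∀ n, η ≤ Real.cos (ψt n))
    (hτ : ∀ n, η ≤ τ n ∧ τ n ≤ 1 / η) (hτt : ∀ n, η ≤ τt n ∧ τt n ≤ 1 / η)
    (h1 : Summable fun n => (τ n * Real.sin (ψ n) - Real.sin (ψt n)) ^ 2)
    (h2 : Summable fun n => (τ n * Real.cos (ψ n) - τt n * Real.cos (ψt n)) ^ 2)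
    (h3 : Summable fun n => (Real.cos (ψ n) - Real.cos (ψt n)) ^ 2)
    (h4 : Summable fun n => (-Real.sin (ψ n) + τt n * Real.sin (ψt n)) ^ 2) :
    (Summable fun n => (Real.sin (ψ n) - Real.sin (ψt n)) ^ 2) ∧
      (Summable fun n => (Real.cos (ψ n) - Real.cos (ψt n)) ^ 2) := by
  refine ⟨?_, h3⟩
  have hτtb : ∀ n, |τt n| ≤ 1 / η := fun n => by
    have := (hτt n).1; have := (hτt n).2
    rw [abs_le]; constructor <;> nlinarith
  have hτb : ∀ n, |τ n| ≤ 1 / η := fun n => by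
    have := (hτ n).1; have := (hτ n).2
    rw [abs_le]; constructor <;> nlinarith
  -- (τ − τ̃) cos ψ ∈ ℓ²
  have hA : Summable fun n => ((τ n - τt n) * Real.cos (ψ n)) ^ 2 := by
    refine (l2_add _ _ h2 (l2_mul (fun n => -τt n)
      (fun n => Real.cos (ψ n) - Real.cos (ψt n)) (1 / η)
      (fun n => by simpa using hτtb n) h3)).congr fun n => by ring
  -- τ − τ̃ ∈ ℓ²
  have hB : Summable fun n => (τ n - τt n) ^ 2 := by
    have := l2_mul (fun n => 1 / Real.cos (ψ n))
      (fun n => (τ n - τt n) * Real.cos (ψ n)) (1 / η)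
      (fun n => by
        have h := hcψ n
        have hc : 0 < Real.cos (ψ n) := lt_of_lt_of_le hη h
        rw [abs_le]; constructor
        · have h0 : 0 < 1 / Real.cos (ψ n) := by positivity
          have h1 : (0:ℝ) < 1 / η := by positivity
          linarith
        · exact one_div_le_one_div_of_le hη h) hA
    refine this.congr fun n => ?_
    have hc : 0 < Real.cos (ψ n) := lt_of_lt_of_le hη (hcψ n)
    have hne : Real.cos (ψ n) ≠ 0 := ne_of_gt hc
    field_simp
  -- (τ τ̃ − 1) sin ψ ∈ ℓ²
  have hC : Summable fun n => ((τ n * τt n - 1) * Real.sin (ψ n)) ^ 2 := by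
    refine (l2_add _ _ (l2_mul (fun n => τt n)
      (fun n => τ n * Real.sin (ψ n) - Real.sin (ψt n)) (1 / η) hτtb h1) h4).congr
      fun n => by ring
  -- (τ² − 1) sin ψ ∈ ℓ²
  have hD : Summable fun n => ((τ n ^ 2 - 1) * Real.sin (ψ n)) ^ 2 := by
    refine (l2_add _ _ hC (l2_mul (fun n => τ n * Real.sin (ψ n))
      (fun n => τ n - τt n) (1 / η)
      (fun n => by
        have h := Real.abs_sin_le_one (ψ n)
        have h2 := hτb n
        calc |τ n * Real.sin (ψ n)| = |τ n| * |Real.sin (ψ n)| := abs_mul _ _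
          _ ≤ (1 / η) * 1 := by
              apply mul_le_mul h2 h (abs_nonneg _) (by positivity)
          _ = 1 / η := mul_one _) hB)).congr fun n => by ring
  -- (τ − 1) sin ψ ∈ ℓ²
  have hE : Summable fun n => ((τ n - 1) * Real.sin (ψ n)) ^ 2 := by
    have := l2_mul (fun n => 1 / (τ n + 1))
      (fun n => (τ n ^ 2 - 1) * Real.sin (ψ n)) 1
      (fun n => by
        have h := (hτ n).1
        have hp : (0:ℝ) < τ n + 1 := by linarith
        rw [abs_le]; constructor
        · have : 0 < 1 / (τ n + 1) := by positivity
          linarith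
        · rw [div_le_one (by linarith)]; linarith) hD
    refine this.congr fun n => ?_
    have h : τ n + 1 ≠ 0 := by have := (hτ n).1; intro hh; nlinarith
    field_simp; ring
  -- conclude
  refine (l2_add _ _ h1 (hE.congr (fun n => by ring_nf) : Summable fun n =>
    (-((τ n - 1) * Real.sin (ψ n))) ^ 2)).congr fun n => by ring
end

section
/- Let T be a bounded self-adjoint operator on a complex Hilbert space H and e ∈ H a unit vector. For real c outside the spectrum of T set r(c) = ⟨(T − c)^{-1} e, e⟩ (a real number), φ(c) = arctan r(c), and κ_c = cos φ(c) · (T − c)^{-1} e. Then for any two distinct reals c, c′ outside the spectrum of T: ⟨κ_c, κ_{c′}⟩ = sin(φ(c) − φ(c′)) / (c − c′). -/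
open scoped InnerProductSpace

/-- Let `T` be a bounded self-adjoint operator on a complex Hilbert
space and `e` a unit vector. With `r(c) = ⟨(T−c)⁻¹e, e⟩` (real), `φ(c) = arctan r(c)`
and `κ_c = cos φ(c) · (T−c)⁻¹ e`, for any two distinct reals `c, c′` outside the
spectrum of `T`: `⟨κ_c, κ_{c′}⟩ = sin(φ(c) − φ(c′))/(c − c′)`. -/
theorem statement12 {H : Type*} [NormedAddCommGroup H] [InnerProductSpace ℂ H]
    [CompleteSpace H]
    (T : H →L[ℂ] H) (hT : IsSelfAdjoint T) (e : H) (he : ‖e‖ = 1)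
    (r φ : ℝ → ℝ) (κ : ℝ → H)
    (hr : ∀ c : ℝ, (r c : ℂ) = ⟪(Ring.inverse (T - (c : ℂ) • 1)) e, e⟫_ℂ)
    (hφ : ∀ c : ℝ, φ c = Real.arctan (r c))
    (hκ : ∀ c : ℝ, κ c = ((Real.cos (φ c) : ℂ)) • (Ring.inverse (T - (c : ℂ) • 1)) e)
    (c c' : ℝ) (hc : (c : ℂ) ∉ spectrum ℂ T) (hc' : (c' : ℂ) ∉ spectrum ℂ T)
    (hne : c ≠ c') :
    ⟪κ c, κ c'⟫_ℂ = ((Real.sin (φ c - φ c') / (c - c') : ℝ) : ℂ) := by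
  have hcc : ((c : ℂ) - c') ≠ 0 := by
    simpa [sub_eq_zero] using fun h => hne (by exact_mod_cast h)
  -- units
  have hunitc : IsUnit (T - (c : ℂ) • 1) := by
    have := spectrum.notMem_iff.mp hc
    rw [Algebra.algebraMap_eq_smul_one] at this
    simpa using this.neg
  have hunitc' : IsUnit (T - (c' : ℂ) • 1) := by
    have := spectrum.notMem_iff.mp hc'
    rw [Algebra.algebraMap_eq_smul_one] at this
    simpa using this.neg
  set A := Ring.inverse (T - (c : ℂ) • 1) with hA
  set B := Ring.inverse (T - (c' : ℂ) • 1) with hB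
  -- self-adjointness of A
  have hsax : IsSelfAdjoint (T - (c : ℂ) • 1) := by
    rw [IsSelfAdjoint, star_sub, star_smul, hT.star_eq, star_one]
    simp
  have hAsa : IsSelfAdjoint A := by
    show star A = A
    rw [hA, ← Ring.inverse_star, hsax.star_eq]
  -- resolvent identity
  have h1 : A * ((T - (c' : ℂ) • 1) * B) = A := by
    rw [Ring.mul_inverse_cancel _ hunitc', mul_one]
  have h2 : (A * (T - (c : ℂ) • 1)) * B = B := by
    rw [Ring.inverse_mul_cancel _ hunitc, one_mul]
  have hres : A - B = ((c : ℂ) - c') • (A * B) := by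
    have h3 : (T - (c' : ℂ) • 1) - (T - (c : ℂ) • 1) = ((c : ℂ) - c') • (1 : H →L[ℂ] H) := by
      rw [sub_sub_sub_cancel_left, ← sub_smul]
    calc A - B = A * ((T - (c' : ℂ) • 1) * B) - (A * (T - (c : ℂ) • 1)) * B := by
          rw [h1, h2]
      _ = A * (((T - (c' : ℂ) • 1) - (T - (c : ℂ) • 1)) * B) := by
          simp only [sub_mul, mul_sub, mul_assoc]
      _ = ((c : ℂ) - c') • (A * B) := by
          rw [h3, smul_mul_assoc, one_mul, mul_smul_comm]
  have hAB : A * B = ((c : ℂ) - c')⁻¹ • (A - B) := by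
    rw [hres, smul_smul, inv_mul_cancel₀ hcc, one_smul]
  -- inner products
  have hrc : ⟪e, A e⟫_ℂ = (r c : ℂ) := by
    rw [← inner_conj_symm, ← hr c]; exact Complex.conj_ofReal _
  have hrc' : ⟪e, B e⟫_ℂ = (r c' : ℂ) := by
    rw [← inner_conj_symm, ← hr c']; exact Complex.conj_ofReal _
  have hmain : ⟪A e, B e⟫_ℂ = ((c : ℂ) - c')⁻¹ * ((r c : ℂ) - (r c' : ℂ)) := by
    calc ⟪A e, B e⟫_ℂ = ⟪e, A (B e)⟫_ℂ := by
          conv_rhs => rw [← ContinuousLinearMap.adjoint_inner_left, hAsa.adjoint_eq]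
      _ = ⟪e, (A * B) e⟫_ℂ := rfl
      _ = ((c : ℂ) - c')⁻¹ * ((r c : ℂ) - (r c' : ℂ)) := by
          rw [hAB]
          simp only [ContinuousLinearMap.smul_apply, ContinuousLinearMap.sub_apply,
            inner_smul_right, inner_sub_right, hrc, hrc']
  -- trig identity
  have key : Real.sin (φ c - φ c') = Real.cos (φ c) * Real.cos (φ c') * (r c - r c') := by
    rw [hφ, hφ, Real.sin_sub, Real.sin_arctan, Real.cos_arctan, Real.sin_arctan,
      Real.cos_arctan]
    ring
  rw [hκ, hκ, inner_smul_left, inner_smul_right, hmain, Complex.conj_ofReal, key]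
  push_cast
  field_simp
end

section
/- Let T be a bounded self-adjoint operator on a complex Hilbert space H and e ∈ H a unit vector. For real c outside the spectrum of T set r(c) = ⟨(T − c)^{-1} e, e⟩ (a real number), φ(c) = arctan r(c), and κ_c = cos φ(c) · (T − c)^{-1} e. Then the function c ↦ r(c) is differentiable on ℝ \ σ(T) with r′(c) = ‖(T − c)^{-1} e‖², and ‖κ_c‖² = r′(c)/(1 + r(c)²); in particular ‖κ_c‖² equals the derivative at c of the function φ = arctan ∘ r. -/
open scoped InnerProductSpace

private lemma statement13_aux {H : Type*} [NormedAddCommGroup H] [InnerProductSpace ℂ H]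
    [CompleteSpace H]
    (T : H →L[ℂ] H) (hT : IsSelfAdjoint T) (e : H)
    (c : ℝ) (hc : (c : ℂ) ∉ spectrum ℂ T) :
    HasDerivAt (fun c : ℝ => Complex.re ⟪e, (Ring.inverse (T - (c : ℂ) • 1)) e⟫_ℂ)
      (‖(Ring.inverse (T - (c : ℂ) • 1)) e‖ ^ 2) c := by
  set A : ℝ → (H →L[ℂ] H) := fun c => T - (c : ℂ) • 1 with hA
  have hU : IsUnit (A c) := by
    rw [spectrum.notMem_iff] at hc
    have : A c = -((algebraMap ℂ (H →L[ℂ] H)) c - T) := by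
      simp [hA, Algebra.algebraMap_eq_smul_one, sub_eq_add_neg]
    rw [this]; exact hc.neg
  obtain ⟨x, hx⟩ := hU
  have hAd : HasDerivAt A (-1 : H →L[ℂ] H) c := by
    have h1 : HasDerivAt (fun c : ℝ => (c : ℂ) • (1 : H →L[ℂ] H)) (1 : H →L[ℂ] H) c := by
      simpa using (hasDerivAt_id c).smul_const (1 : H →L[ℂ] H)
    have h2 := (hasDerivAt_const c T).sub h1
    rw [zero_sub] at h2
    exact h2
  set R : H →L[ℂ] H := Ring.inverse (A c) with hR
  have hRx : R = (↑x⁻¹ : H →L[ℂ] H) := by rw [hR, ← hx, Ring.inverse_unit]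
  have hFd : HasDerivAt (fun c => Ring.inverse (A c)) (R * R) c := by
    have h := (hasFDerivAt_ringInverse (𝕜 := ℝ) x)
    rw [hx] at h
    have := h.comp_hasDerivAt c hAd
    simpa [hRx, ContinuousLinearMap.mulLeftRight_apply, Function.comp_def] using this
  set L : (H →L[ℂ] H) →L[ℝ] ℝ :=
    Complex.reCLM.comp (((innerSL ℂ e).comp (ContinuousLinearMap.apply ℂ H e)).restrictScalars ℝ)
    with hL
  have hLd : HasDerivAt (fun c => L (Ring.inverse (A c))) (L (R * R)) c :=
    (L.hasFDerivAt.comp_hasDerivAt c hFd)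
  have hLval : L (R * R) = ‖R e‖ ^ 2 := by
    have hRsa : IsSelfAdjoint R := by
      rw [hR]
      have : IsSelfAdjoint (A c) := by
        rw [hA]
        refine hT.sub ?_
        simp only [IsSelfAdjoint, star_smul, star_one, Complex.star_def, Complex.conj_ofReal]
      simpa [IsSelfAdjoint] using congrArg Ring.inverse this.star_eq ▸ (Ring.inverse_star (A c)).symm
    have hadj : ContinuousLinearMap.adjoint R = R := hRsa
    have key : ⟪e, (R * R) e⟫_ℂ = ⟪R e, R e⟫_ℂ := by
      have := ContinuousLinearMap.adjoint_inner_left R (R e) e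
      rw [hadj] at this
      simpa [ContinuousLinearMap.mul_apply] using this.symm
    rw [hL]
    simp only [ContinuousLinearMap.coe_comp', Function.comp_apply,
      ContinuousLinearMap.coe_restrictScalars', innerSL_apply_apply,
      ContinuousLinearMap.apply_apply, Complex.reCLM_apply]
    rw [key]
    exact_mod_cast inner_self_eq_norm_sq (𝕜 := ℂ) (R e)
  have goal_eq : (fun c : ℝ => (⟪e, (Ring.inverse (T - (c : ℂ) • 1)) e⟫_ℂ).re)
      = fun c => L (Ring.inverse (A c)) := by
    funext d
    simp [hL, hA]
  rw [goal_eq, ← hLval]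
  exact hLd

/-- Let `T` be a bounded self-adjoint operator on a complex Hilbert
space and `e` a unit vector. With `r(c) = ⟨(T−c)⁻¹e, e⟩` (real), `φ(c) = arctan r(c)`
and `κ_c = cos φ(c) · (T−c)⁻¹ e`, the function `r` is differentiable on `ℝ \ σ(T)`
with `r′(c) = ‖(T−c)⁻¹e‖²`, and `‖κ_c‖² = r′(c)/(1 + r(c)²)`; in particular `‖κ_c‖²`
is the derivative at `c` of `φ = arctan ∘ r`. -/
theorem statement13 {H : Type*} [NormedAddCommGroup H] [InnerProductSpace ℂ H]
    [CompleteSpace H]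
    (T : H →L[ℂ] H) (hT : IsSelfAdjoint T) (e : H) (he : ‖e‖ = 1)
    (r φ : ℝ → ℝ) (κ : ℝ → H)
    (hr : ∀ c : ℝ, (r c : ℂ) = ⟪(Ring.inverse (T - (c : ℂ) • 1)) e, e⟫_ℂ)
    (hφ : ∀ c : ℝ, φ c = Real.arctan (r c))
    (hκ : ∀ c : ℝ, κ c = ((Real.cos (φ c) : ℂ)) • (Ring.inverse (T - (c : ℂ) • 1)) e)
    (c : ℝ) (hc : (c : ℂ) ∉ spectrum ℂ T) :
    HasDerivAt r (‖(Ring.inverse (T - (c : ℂ) • 1)) e‖ ^ 2) c ∧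
      ‖κ c‖ ^ 2 = ‖(Ring.inverse (T - (c : ℂ) • 1)) e‖ ^ 2 / (1 + r c ^ 2) ∧
      HasDerivAt φ (‖κ c‖ ^ 2) c := by
  have hre : r = fun c : ℝ => Complex.re ⟪e, (Ring.inverse (T - (c : ℂ) • 1)) e⟫_ℂ := by
    funext d
    have := congrArg Complex.re (hr d)
    have h2 : (⟪e, (Ring.inverse (T - (d : ℂ) • 1)) e⟫_ℂ).re
        = (⟪(Ring.inverse (T - (d : ℂ) • 1)) e, e⟫_ℂ).re := by
      rw [← inner_conj_symm, Complex.conj_re]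
    rw [h2]; simpa using this
  have hrd : HasDerivAt r (‖(Ring.inverse (T - (c : ℂ) • 1)) e‖ ^ 2) c := by
    rw [hre]; exact statement13_aux T hT e c hc
  have hpos : (0 : ℝ) < 1 + r c ^ 2 := by positivity
  have hκ2 : ‖κ c‖ ^ 2 = ‖(Ring.inverse (T - (c : ℂ) • 1)) e‖ ^ 2 / (1 + r c ^ 2) := by
    rw [hκ c, norm_smul, Complex.norm_real, Real.norm_eq_abs, mul_pow, sq_abs, hφ c,
      Real.cos_sq_arctan]
    ring
  refine ⟨hrd, hκ2, ?_⟩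
  have hφd : HasDerivAt φ (1 / (1 + r c ^ 2) * ‖(Ring.inverse (T - (c : ℂ) • 1)) e‖ ^ 2) c := by
    have : φ = Real.arctan ∘ r := by funext d; exact hφ d
    rw [this]
    exact (Real.hasDerivAt_arctan (r c)).comp c hrd
  convert hφd using 1
  rw [hκ2]; ring
end
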